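/- arXiv:1806.08449 — 9 statements merged into one kernel-verified Lean document; each statement's English description precedes it below -/
import Mathlib

section
/- Under the principal-function hypotheses, if g : 𝒴 → ℝ is given by g(y) = Σ_{i=0}^{d} β_i g_i(y) for real coefficients β_i, then the function f*(x) = Σ_{i=0}^{d} β_i √λ_i f_i(x) minimizes E[(f(X) − g(Y))²] over all functions f : 𝒳 → ℝ; that is, for every f : 𝒳 → ℝ, E[(f*(X) − g(Y))²] ≤ E[(f(X) − g(Y))²]. -/
open scoped BigOperators

/-- The marginal pmf of `X`. -/
def pXm {𝒳 𝒴 : Type} [Fintype 𝒴] (P : 𝒳 → 𝒴 → ℝ) (x : 𝒳) : ℝ := ∑ y, P x y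

/-- The marginal pmf of `Y`. -/
def pYm {𝒳 𝒴 : Type} [Fintype 𝒳] (P : 𝒳 → 𝒴 → ℝ) (y : 𝒴) : ℝ := ∑ x, P x y

/-- The principal-function hypotheses: a joint pmf `P` on finite alphabets `𝒳 × 𝒴` with
strictly positive marginals, together with principal functions `f 0, …, f d : 𝒳 → ℝ`,
`g 0, …, g d : 𝒴 → ℝ` and principal inertia components `lam 0, …, lam d ∈ [0,1]`,
where `d = |𝒴| − 1`, satisfying: `f 0 ≡ 1`, `g 0 ≡ 1`, `lam 0 = 1`, orthonormality
`E[f i (X) f j (X)] = δ_{ij}`, `E[g i (Y) g j (Y)] = δ_{ij}`, diagonalization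
`E[f i (X)|Y = y] = √(lam i) g i y`, `E[g i (Y)|X = x] = √(lam i) f i x` for `i ≠ 0`,
and the property that `g 0, …, g d` form a basis of all functions `𝒴 → ℝ`. -/
structure PrincipalSystem (𝒳 𝒴 : Type) [Fintype 𝒳] [Fintype 𝒴] (d : ℕ) where
  P : 𝒳 → 𝒴 → ℝ
  f : Fin (d + 1) → 𝒳 → ℝ
  g : Fin (d + 1) → 𝒴 → ℝ
  lam : Fin (d + 1) → ℝ
  nonneg : ∀ x y, 0 ≤ P x y
  sum_one : ∑ x, ∑ y, P x y = 1
  pX_pos : ∀ x, 0 < pXm P x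
  pY_pos : ∀ y, 0 < pYm P y
  dim : d = Fintype.card 𝒴 - 1
  lam_zero : lam 0 = 1
  lam_mem : ∀ i, lam i ∈ Set.Icc (0 : ℝ) 1
  f_zero : ∀ x, f 0 x = 1
  g_zero : ∀ y, g 0 y = 1
  orth_f : ∀ i j, ∑ x, pXm P x * (f i x * f j x) = if i = j then 1 else 0
  orth_g : ∀ i j, ∑ y, pYm P y * (g i y * g j y) = if i = j then 1 else 0
  cond_f : ∀ i : Fin (d + 1), i ≠ 0 → ∀ y,
    (∑ x, P x y * f i x) / pYm P y = Real.sqrt (lam i) * g i y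
  cond_g : ∀ i : Fin (d + 1), i ≠ 0 → ∀ x,
    (∑ y, P x y * g i y) / pXm P x = Real.sqrt (lam i) * f i x
  basis_g : ∀ h : 𝒴 → ℝ, ∃ β : Fin (d + 1) → ℝ, ∀ y, h y = ∑ i, β i * g i y

/-- **The MMSE estimator of a function of `Y` in terms of principal functions.**
If `g(y) = Σ_i β i * g i y`, then `f*(x) = Σ_i β i * √(lam i) * f i x` minimizes
`E[(f(X) − g(Y))²]` over all `f : 𝒳 → ℝ`. -/
theorem mmse_principal_functions
    {𝒳 𝒴 : Type} [Fintype 𝒳] [Fintype 𝒴] {d : ℕ}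
    (S : PrincipalSystem 𝒳 𝒴 d) (β : Fin (d + 1) → ℝ) (F : 𝒳 → ℝ) :
    ∑ x, ∑ y, S.P x y *
        ((∑ i, β i * (Real.sqrt (S.lam i) * S.f i x)) - (∑ i, β i * S.g i y)) ^ 2
      ≤ ∑ x, ∑ y, S.P x y * (F x - (∑ i, β i * S.g i y)) ^ 2 := by

  classical
  set G : 𝒴 → ℝ := fun y => ∑ i, β i * S.g i y with hG
  set fs : 𝒳 → ℝ := fun x => ∑ i, β i * (Real.sqrt (S.lam i) * S.f i x) with hfs
  have keyi : ∀ (x : 𝒳) (i : Fin (d + 1)),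
      ∑ y, S.P x y * S.g i y = pXm S.P x * (Real.sqrt (S.lam i) * S.f i x) := by
    intro x i
    by_cases hi : i = 0
    · subst hi
      simp [S.g_zero, S.f_zero, S.lam_zero, pXm]
    · have h := S.cond_g i hi x
      have hpos := (S.pX_pos x).ne'
      field_simp at h
      rw [h]; ring
  have key : ∀ x, ∑ y, S.P x y * G y = pXm S.P x * fs x := by
    intro x
    have : ∑ y, S.P x y * G y = ∑ i, β i * ∑ y, S.P x y * S.g i y := by
      simp only [hG, Finset.mul_sum]
      rw [Finset.sum_comm]
      refine Finset.sum_congr rfl fun i _ => ?_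
      refine Finset.sum_congr rfl fun y _ => ?_
      ring
    rw [this]
    simp only [keyi, hfs, Finset.mul_sum]
    congr 1; ext i; ring
  have cross : ∀ x, ∑ y, S.P x y * (2 * (F x - fs x) * (fs x - G y)) = 0 := by
    intro x
    have h0 : ∑ y, S.P x y * (2 * (F x - fs x) * (fs x - G y))
        = ∑ y, 2 * (F x - fs x) * (fs x * S.P x y - S.P x y * G y) := by
      refine Finset.sum_congr rfl fun y _ => ?_; ring
    rw [h0, ← Finset.mul_sum, Finset.sum_sub_distrib, ← Finset.mul_sum, key x]
    have hp : (∑ y, S.P x y) = pXm S.P x := rfl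
    rw [hp]; ring
  have expand : ∀ x, ∑ y, S.P x y * (F x - G y) ^ 2
      = (∑ y, S.P x y * (fs x - G y) ^ 2) + (F x - fs x) ^ 2 * (∑ y, S.P x y) := by
    intro x
    have h1 : ∀ y, S.P x y * (F x - G y) ^ 2
        = S.P x y * (fs x - G y) ^ 2 + S.P x y * (F x - fs x) ^ 2
          + S.P x y * (2 * (F x - fs x) * (fs x - G y)) := by
      intro y; ring
    calc ∑ y, S.P x y * (F x - G y) ^ 2
        = (∑ y, S.P x y * (fs x - G y) ^ 2) + (∑ y, S.P x y * (F x - fs x) ^ 2)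
          + ∑ y, S.P x y * (2 * (F x - fs x) * (fs x - G y)) := by
          simp only [h1, Finset.sum_add_distrib]
      _ = (∑ y, S.P x y * (fs x - G y) ^ 2) + (F x - fs x) ^ 2 * (∑ y, S.P x y) := by
          rw [cross x, add_zero, Finset.mul_sum]
          congr 2
          ext y; ring
  calc ∑ x, ∑ y, S.P x y * (fs x - G y) ^ 2
      ≤ ∑ x, ((∑ y, S.P x y * (fs x - G y) ^ 2) + (F x - fs x) ^ 2 * (∑ y, S.P x y)) := by
        apply Finset.sum_le_sum
        intro x _
        have h2 : 0 ≤ (F x - fs x) ^ 2 * (∑ y, S.P x y) :=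
          mul_nonneg (sq_nonneg _) (Finset.sum_nonneg fun y _ => S.nonneg x y)
        linarith
    _ = ∑ x, ∑ y, S.P x y * (F x - G y) ^ 2 := by
        apply Finset.sum_congr rfl
        intro x _
        rw [expand x]
end

section
/- (Reconstitution formula) Under the principal-function hypotheses, for every x ∈ 𝒳 and y ∈ 𝒴, P_{X,Y}(x,y) / (p_X(x) p_Y(y)) = 1 + Σ_{i=1}^{d} √λ_i f_i(x) g_i(y). -/
open scoped BigOperators

/-- **Reconstitution formula.**  Under the principal-function hypotheses, for all `x, y`,
`P(x,y) / (pX(x) pY(y)) = 1 + Σ_{i=1}^d √(lam i) * f i x * g i y`. -/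
theorem reconstitution_formula
    {𝒳 𝒴 : Type} [Fintype 𝒳] [Fintype 𝒴] {d : ℕ}
    (S : PrincipalSystem 𝒳 𝒴 d) (x : 𝒳) (y : 𝒴) :
    S.P x y / (pXm S.P x * pYm S.P y)
      = 1 + ∑ i ∈ Finset.univ.erase (0 : Fin (d + 1)),
          Real.sqrt (S.lam i) * S.f i x * S.g i y := by

  obtain ⟨β, hβ⟩ := S.basis_g (fun y => S.P x y / (pXm S.P x * pYm S.P y))
  -- β i = ∑ y, pYm P y * g i y * h y
  have key : ∀ i, β i = ∑ z, pYm S.P z * (S.g i z * (S.P x z / (pXm S.P x * pYm S.P z))) := by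
    intro i
    have : ∀ z, pYm S.P z * (S.g i z * (S.P x z / (pXm S.P x * pYm S.P z)))
        = ∑ j, β j * (pYm S.P z * (S.g i z * S.g j z)) := by
      intro z
      rw [hβ z, Finset.mul_sum, Finset.mul_sum]
      exact Finset.sum_congr rfl (fun j _ => by ring)
    simp only [this]
    rw [Finset.sum_comm]
    simp [← Finset.mul_sum, S.orth_g]
  -- evaluate the integral
  have eval : ∀ i, (∑ z, pYm S.P z * (S.g i z * (S.P x z / (pXm S.P x * pYm S.P z))))
      = (∑ z, S.P x z * S.g i z) / pXm S.P x := by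
    intro i
    rw [Finset.sum_div]
    refine Finset.sum_congr rfl (fun z _ => ?_)
    have hz : pYm S.P z ≠ 0 := (S.pY_pos z).ne'
    calc pYm S.P z * (S.g i z * (S.P x z / (pXm S.P x * pYm S.P z)))
        = S.g i z * S.P x z * (pYm S.P z / pYm S.P z) / pXm S.P x := by ring
      _ = S.P x z * S.g i z / pXm S.P x := by rw [div_self hz]; ring
  have hβ0 : β 0 = 1 := by
    rw [key 0, eval 0]
    have : (∑ z, S.P x z * S.g 0 z) = pXm S.P x := by
      simp [S.g_zero, pXm]
    rw [this, div_self (S.pX_pos x).ne']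
  have hβi : ∀ i : Fin (d+1), i ≠ 0 → β i = Real.sqrt (S.lam i) * S.f i x := by
    intro i hi
    rw [key i, eval i, S.cond_g i hi x]
  have := hβ y
  rw [this, ← Finset.add_sum_erase _ _ (Finset.mem_univ (0 : Fin (d+1))), hβ0, S.g_zero,
    mul_one]
  congr 1
  refine Finset.sum_congr rfl (fun i hi => ?_)
  rw [hβi i (Finset.ne_of_mem_erase hi)]
end

section
/- Under the principal-function hypotheses, the sum of the principal inertia components equals the χ²-divergence between the joint distribution and the product of the marginals; that is, Σ_{i=1}^{d} λ_i = Σ_{x∈𝒳} Σ_{y∈𝒴} (P_{X,Y}(x,y) − p_X(x) p_Y(y))² / (p_X(x) p_Y(y)). -/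
open scoped BigOperators

/-- **Sum of the PICs equals the χ²-divergence** between the joint distribution and the
product of the marginals. -/
theorem sum_pic_eq_chiSq
    {𝒳 𝒴 : Type} [Fintype 𝒳] [Fintype 𝒴] {d : ℕ}
    (S : PrincipalSystem 𝒳 𝒴 d) :
    ∑ i ∈ Finset.univ.erase (0 : Fin (d + 1)), S.lam i
      = ∑ x, ∑ y, (S.P x y - pXm S.P x * pYm S.P y) ^ 2 / (pXm S.P x * pYm S.P y) := by
  classical
  have hpX : ∀ x, pXm S.P x ≠ 0 := fun x => (S.pX_pos x).ne'
  have hpY : ∀ y, pYm S.P y ≠ 0 := fun y => (S.pY_pos y).ne'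
  have hsumX : ∑ x, pXm S.P x = 1 := by simpa [pXm] using S.sum_one
  have hsumY : ∑ y, pYm S.P y = 1 := by
    rw [← S.sum_one, Finset.sum_comm]; rfl
  -- expansion of the density ratio in the g-basis
  have key : ∀ x y, S.P x y / (pXm S.P x * pYm S.P y)
      = ∑ i, (Real.sqrt (S.lam i) * S.f i x) * S.g i y := by
    intro x
    obtain ⟨β, hβ⟩ := S.basis_g (fun y => S.P x y / (pXm S.P x * pYm S.P y))
    have hcoef : ∀ j, β j = Real.sqrt (S.lam j) * S.f j x := by
      intro j
      have h1 : (∑ y, pYm S.P y * (S.g j y * (S.P x y / (pXm S.P x * pYm S.P y)))) = β j := by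
        calc (∑ y, pYm S.P y * (S.g j y * (S.P x y / (pXm S.P x * pYm S.P y))))
            = ∑ y, ∑ i, β i * (pYm S.P y * (S.g j y * S.g i y)) := by
              refine Finset.sum_congr rfl fun y _ => ?_
              rw [hβ y, Finset.mul_sum, Finset.mul_sum]
              exact Finset.sum_congr rfl fun i _ => by ring
          _ = ∑ i, ∑ y, β i * (pYm S.P y * (S.g j y * S.g i y)) := Finset.sum_comm
          _ = ∑ i, β i * ∑ y, pYm S.P y * (S.g j y * S.g i y) := by
              simp_rw [Finset.mul_sum]
          _ = ∑ i, β i * (if j = i then 1 else 0) := by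
              simp_rw [S.orth_g]
          _ = β j := by simp
      have h2 : (∑ y, pYm S.P y * (S.g j y * (S.P x y / (pXm S.P x * pYm S.P y))))
          = Real.sqrt (S.lam j) * S.f j x := by
        have hterm : ∀ y, pYm S.P y * (S.g j y * (S.P x y / (pXm S.P x * pYm S.P y)))
            = (S.P x y * S.g j y) / pXm S.P x := by
          intro y
          field_simp [hpX x, hpY y]
        rw [Finset.sum_congr rfl fun y _ => hterm y, ← Finset.sum_div]
        by_cases hj : j = 0
        · subst hj
          simp only [S.g_zero, S.lam_zero, S.f_zero, Real.sqrt_one, mul_one]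
          have : (∑ y, S.P x y) = pXm S.P x := rfl
          rw [this, div_self (hpX x)]
        · exact S.cond_g j hj x
      rw [← h1]; exact h2
    intro y
    rw [hβ y]
    exact Finset.sum_congr rfl fun i _ => by rw [hcoef i]
  -- Parseval per x
  have pars : ∀ x, ∑ y, pYm S.P y * (S.P x y / (pXm S.P x * pYm S.P y)) ^ 2
      = ∑ i, S.lam i * (S.f i x * S.f i x) := by
    intro x
    calc ∑ y, pYm S.P y * (S.P x y / (pXm S.P x * pYm S.P y)) ^ 2
        = ∑ y, ∑ i, ∑ j, (Real.sqrt (S.lam i) * S.f i x) * (Real.sqrt (S.lam j) * S.f j x)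
            * (pYm S.P y * (S.g i y * S.g j y)) := by
          refine Finset.sum_congr rfl fun y _ => ?_
          rw [key x y, sq, Finset.sum_mul_sum, Finset.mul_sum]
          refine Finset.sum_congr rfl fun i _ => ?_
          rw [Finset.mul_sum]
          exact Finset.sum_congr rfl fun j _ => by ring
      _ = ∑ i, ∑ j, ∑ y, (Real.sqrt (S.lam i) * S.f i x) * (Real.sqrt (S.lam j) * S.f j x)
            * (pYm S.P y * (S.g i y * S.g j y)) := by
          rw [Finset.sum_comm]
          exact Finset.sum_congr rfl fun i _ => Finset.sum_comm
      _ = ∑ i, ∑ j, (Real.sqrt (S.lam i) * S.f i x) * (Real.sqrt (S.lam j) * S.f j x)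
            * ∑ y, pYm S.P y * (S.g i y * S.g j y) := by
          simp_rw [Finset.mul_sum]
      _ = ∑ i, ∑ j, (Real.sqrt (S.lam i) * S.f i x) * (Real.sqrt (S.lam j) * S.f j x)
            * (if i = j then 1 else 0) := by
          simp_rw [S.orth_g]
      _ = ∑ i, (Real.sqrt (S.lam i) * S.f i x) * (Real.sqrt (S.lam i) * S.f i x) := by
          simp
      _ = ∑ i, S.lam i * (S.f i x * S.f i x) := by
          refine Finset.sum_congr rfl fun i _ => ?_
          have h := Real.mul_self_sqrt (S.lam_mem i).1
          ring_nf
          rw [Real.sq_sqrt (S.lam_mem i).1]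
          ring
  -- main identity
  have main : ∑ x, ∑ y, (S.P x y) ^ 2 / (pXm S.P x * pYm S.P y) = ∑ i, S.lam i := by
    calc ∑ x, ∑ y, (S.P x y) ^ 2 / (pXm S.P x * pYm S.P y)
        = ∑ x, ∑ y, pXm S.P x * (pYm S.P y * (S.P x y / (pXm S.P x * pYm S.P y)) ^ 2) := by
          refine Finset.sum_congr rfl fun x _ => Finset.sum_congr rfl fun y _ => ?_
          field_simp [hpX x, hpY y]
      _ = ∑ x, pXm S.P x * ∑ y, pYm S.P y * (S.P x y / (pXm S.P x * pYm S.P y)) ^ 2 := by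
          simp_rw [Finset.mul_sum]
      _ = ∑ x, pXm S.P x * ∑ i, S.lam i * (S.f i x * S.f i x) := by
          exact Finset.sum_congr rfl fun x _ => by rw [pars x]
      _ = ∑ x, ∑ i, S.lam i * (pXm S.P x * (S.f i x * S.f i x)) := by
          refine Finset.sum_congr rfl fun x _ => ?_
          rw [Finset.mul_sum]
          exact Finset.sum_congr rfl fun i _ => by ring
      _ = ∑ i, S.lam i * ∑ x, pXm S.P x * (S.f i x * S.f i x) := by
          rw [Finset.sum_comm]
          simp_rw [Finset.mul_sum]
      _ = ∑ i, S.lam i := by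
          simp_rw [S.orth_f]
          simp
  -- χ² expansion
  have chi : ∀ x y, (S.P x y - pXm S.P x * pYm S.P y) ^ 2 / (pXm S.P x * pYm S.P y)
      = (S.P x y) ^ 2 / (pXm S.P x * pYm S.P y) - 2 * S.P x y + pXm S.P x * pYm S.P y := by
    intro x y
    field_simp [hpX x, hpY y]
    ring
  calc ∑ i ∈ Finset.univ.erase (0 : Fin (d + 1)), S.lam i
      = ∑ i, S.lam i - S.lam 0 := by
        rw [← Finset.sum_erase_add Finset.univ S.lam (Finset.mem_univ 0)]
        ring
    _ = ∑ i, S.lam i - 1 := by rw [S.lam_zero]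
    _ = ∑ x, ∑ y, ((S.P x y) ^ 2 / (pXm S.P x * pYm S.P y) - 2 * S.P x y
          + pXm S.P x * pYm S.P y) := by
        have e1 : ∑ x, ∑ y, ((S.P x y) ^ 2 / (pXm S.P x * pYm S.P y) - 2 * S.P x y
            + pXm S.P x * pYm S.P y)
            = (∑ x, ∑ y, (S.P x y) ^ 2 / (pXm S.P x * pYm S.P y))
              - 2 * (∑ x, ∑ y, S.P x y) + (∑ x, ∑ y, pXm S.P x * pYm S.P y) := by
          simp [Finset.sum_add_distrib, Finset.sum_sub_distrib, Finset.mul_sum]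
        have e2 : (∑ x, ∑ y, pXm S.P x * pYm S.P y) = 1 := by
          rw [← Finset.sum_mul_sum, hsumX, hsumY, one_mul]
        rw [e1, main, S.sum_one, e2]
        ring
    _ = ∑ x, ∑ y, (S.P x y - pXm S.P x * pYm S.P y) ^ 2 / (pXm S.P x * pYm S.P y) := by
        exact Finset.sum_congr rfl fun x _ => Finset.sum_congr rfl fun y _ => (chi x y).symm
end

section
/- Let C ∈ ℝ^{d×d} be symmetric positive definite and M ∈ ℝ^{d×d}. Then the supremum of tr(A·M) over all A ∈ ℝ^{d×d} satisfying A C Aᵀ = I_d equals the sum of the singular values of C^{−1/2} M, and the supremum is attained (namely by A = V Uᵀ C^{−1/2}, where C^{−1/2} M = U Σ Vᵀ is a singular value decomposition). -/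
open scoped BigOperators
open Matrix
open scoped MatrixOrder

/-!
Substituting `B = A R` turns the constraint `A C Aᵀ = I` into `B Bᵀ = I`, and
`tr(A M) = tr(B R⁻¹ M) = tr(Vᵀ B U Σ) = ∑ Wᵢᵢ σᵢ` with `W = Vᵀ B U` orthogonal. The diagonal
entries of an orthogonal matrix are at most `1`, so `tr(A M) ≤ ∑ σᵢ`, with equality for `W = I`,
i.e. `B = V Uᵀ`. Finally `∑ σᵢ` is the sum of the singular values because `V Σ Vᵀ` is the
square root of `(R⁻¹ M)ᵀ (R⁻¹ M)`.
-/

noncomputable def singularValues {m n : Type*} [Fintype m] [Fintype n] [DecidableEq n]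
    (M : Matrix m n ℝ) : n → ℝ :=
  fun i => Real.sqrt ((Matrix.isHermitian_conjTranspose_mul_self M).eigenvalues i)

namespace Matrix

variable {m n : Type*} [Fintype m] [Fintype n] [DecidableEq n]

theorem PosSemidef.trace_sqrt {A : Matrix n n ℝ} (hA : A.PosSemidef) :
    (CFC.sqrt A).trace = ∑ i, √(hA.1.eigenvalues i) := by
  rw [CFC.sqrt_eq_cfc, cfc_nnreal_eq_real _ A, hA.1.cfc_eq, IsHermitian.cfc,
    Unitary.conjStarAlgAut_apply, trace_mul_cycle, Unitary.coe_star_mul_self, one_mul,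
    trace_diagonal]
  simp [max_eq_left (hA.eigenvalues_nonneg _)]

theorem sum_singularValues_eq_trace_sqrt (N : Matrix m n ℝ) :
    ∑ i, singularValues N i = (CFC.sqrt (Nᵀ * N)).trace :=
  ((posSemidef_conjTranspose_mul_self N).trace_sqrt).symm

theorem sum_singularValues_of_eq_mul_diagonal_mul {N U : Matrix m n ℝ} {V : Matrix n n ℝ}
    {f : n → ℝ} (hU : Uᵀ * U = 1) (hV : Vᵀ * V = 1) (hf : 0 ≤ f)
    (hN : N = U * diagonal f * Vᵀ) :
    ∑ i, singularValues N i = ∑ i, f i := by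
  have hsq : (V * diagonal f * Vᵀ) * (V * diagonal f * Vᵀ) = Nᵀ * N := by
    subst hN
    simp only [transpose_mul, transpose_transpose, diagonal_transpose, Matrix.mul_assoc]
    rw [← Matrix.mul_assoc Vᵀ V, hV, Matrix.one_mul, ← Matrix.mul_assoc Uᵀ U, hU,
      Matrix.one_mul]
  have hpsd : (V * diagonal f * Vᵀ).PosSemidef := by
    simpa using (posSemidef_diagonal_iff.mpr hf).mul_mul_conjTranspose_same V
  have hsqrt : CFC.sqrt (Nᵀ * N) = V * diagonal f * Vᵀ :=
    (CFC.sqrt_eq_iff _ _ (posSemidef_conjTranspose_mul_self N).nonneg hpsd.nonneg).mpr hsq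
  rw [sum_singularValues_eq_trace_sqrt, hsqrt, trace_mul_cycle, hV, Matrix.one_mul,
    trace_diagonal]

theorem diag_le_one_of_mul_transpose_eq_one {W : Matrix n n ℝ} (hW : W * Wᵀ = 1) (i : n) :
    W i i ≤ 1 := by
  have hrow : ∑ j, W i j * W i j = 1 := by
    simpa [mul_apply] using congrFun (congrFun hW i) i
  have hsq : W i i * W i i ≤ 1 :=
    hrow ▸ Finset.single_le_sum (fun j _ => mul_self_nonneg (W i j)) (Finset.mem_univ i)
  exact le_of_abs_le (abs_le_one_iff_mul_self_le_one.mpr hsq)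

theorem trace_mul_diagonal_le_sum {W : Matrix n n ℝ} {f : n → ℝ} (hW : W * Wᵀ = 1)
    (hf : 0 ≤ f) : (W * diagonal f).trace ≤ ∑ i, f i := by
  simp only [trace, diag, mul_diagonal]
  exact Finset.sum_le_sum fun i _ =>
    mul_le_of_le_one_left (hf i) (diag_le_one_of_mul_transpose_eq_one hW i)

theorem trace_mul_le_sum_of_eq_mul_diagonal_mul {B N U V : Matrix n n ℝ} {f : n → ℝ}
    (hB : B * Bᵀ = 1) (hU : U * Uᵀ = 1) (hV : Vᵀ * V = 1) (hf : 0 ≤ f)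
    (hN : N = U * diagonal f * Vᵀ) : (B * N).trace ≤ ∑ i, f i := by
  have htrace : (B * N).trace = (Vᵀ * B * U * diagonal f).trace := by
    rw [hN, ← Matrix.mul_assoc, ← Matrix.mul_assoc, trace_mul_comm, ← Matrix.mul_assoc,
      ← Matrix.mul_assoc]
  have horth : (Vᵀ * B * U) * (Vᵀ * B * U)ᵀ = 1 := by
    simp only [transpose_mul, transpose_transpose, Matrix.mul_assoc]
    rw [← Matrix.mul_assoc U, hU, Matrix.one_mul, ← Matrix.mul_assoc B, hB, Matrix.one_mul, hV]
  exact htrace ▸ trace_mul_diagonal_le_sum horth hf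

theorem trace_mul_eq_sum_of_eq_mul_diagonal_mul {N U : Matrix m n ℝ} {V : Matrix n n ℝ}
    {f : n → ℝ} (hU : Uᵀ * U = 1) (hV : Vᵀ * V = 1) (hN : N = U * diagonal f * Vᵀ) :
    (V * Uᵀ * N).trace = ∑ i, f i := by
  rw [hN, Matrix.mul_assoc V, ← Matrix.mul_assoc Uᵀ, ← Matrix.mul_assoc Uᵀ, hU, Matrix.one_mul,
    ← Matrix.mul_assoc, trace_mul_cycle, hV, Matrix.one_mul, trace_diagonal]

end Matrix

theorem trace_max_over_C_orthogonal_general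
    {d : ℕ} (C M R : Matrix (Fin d) (Fin d) ℝ)
    (hR : R.PosDef) (hRC : R * R = C)
    (U Sig V : Matrix (Fin d) (Fin d) ℝ)
    (hU : U * Uᵀ = 1) (hV : V * Vᵀ = 1)
    (hSigdiag : ∀ i j, i ≠ j → Sig i j = 0) (hSignonneg : ∀ i, 0 ≤ Sig i i)
    (hSVD : R⁻¹ * M = U * Sig * Vᵀ) :
    IsGreatest {t : ℝ | ∃ A : Matrix (Fin d) (Fin d) ℝ, A * C * Aᵀ = 1 ∧ t = (A * M).trace}
      (∑ i, singularValues (R⁻¹ * M) i) ∧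
    ((V * Uᵀ * R⁻¹) * M).trace = ∑ i, singularValues (R⁻¹ * M) i ∧
    (V * Uᵀ * R⁻¹) * C * (V * Uᵀ * R⁻¹)ᵀ = 1 := by
  have hRT : Rᵀ = R := hR.1
  have hRdet : IsUnit R.det := (isUnit_iff_isUnit_det R).mp hR.isUnit
  have hUU : Uᵀ * U = 1 := mul_eq_one_comm.mp hU
  have hVV : Vᵀ * V = 1 := mul_eq_one_comm.mp hV
  have hSVDdiag : R⁻¹ * M = U * diagonal Sig.diag * Vᵀ := by
    rw [(show Sig.IsDiag from hSigdiag).diagonal_diag, hSVD]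
  have hsum : ∑ i, singularValues (R⁻¹ * M) i = ∑ i, Sig.diag i :=
    sum_singularValues_of_eq_mul_diagonal_mul hUU hVV hSignonneg hSVDdiag
  have hcon : ∀ A : Matrix (Fin d) (Fin d) ℝ, A * C * Aᵀ = (A * R) * (A * R)ᵀ := fun A => by
    rw [← hRC, transpose_mul, hRT]; simp only [Matrix.mul_assoc]
  have hAM : ∀ A : Matrix (Fin d) (Fin d) ℝ, A * M = (A * R) * (R⁻¹ * M) := fun A => by
    rw [Matrix.mul_assoc, ← Matrix.mul_assoc R, mul_nonsing_inv R hRdet, Matrix.one_mul]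
  have hmaxR : V * Uᵀ * R⁻¹ * R = V * Uᵀ := by
    rw [Matrix.mul_assoc, nonsing_inv_mul R hRdet, Matrix.mul_one]
  have hfeas : (V * Uᵀ * R⁻¹) * C * (V * Uᵀ * R⁻¹)ᵀ = 1 := by
    rw [hcon, hmaxR, transpose_mul, transpose_transpose, Matrix.mul_assoc, ← Matrix.mul_assoc Uᵀ,
      hUU, Matrix.one_mul, hV]
  have hval : ((V * Uᵀ * R⁻¹) * M).trace = ∑ i, singularValues (R⁻¹ * M) i := by
    rw [hAM, hmaxR, hsum, trace_mul_eq_sum_of_eq_mul_diagonal_mul hUU hVV hSVDdiag]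
  refine ⟨⟨⟨_, hfeas, hval.symm⟩, ?_⟩, hval, hfeas⟩
  rintro _ ⟨A, hA, rfl⟩
  rw [hAM, hsum]
  exact trace_mul_le_sum_of_eq_mul_diagonal_mul (hcon A ▸ hA) hU hVV hSignonneg hSVDdiag

/-- For `C` symmetric positive definite (with symmetric positive definite
square root `R`, so `C^{−1/2} = R⁻¹`) and any `M`, the supremum of `tr(A·M)` over all `A`
with `A C Aᵀ = I` equals the sum of the singular values of `C^{−1/2} M`, and it is attained
by `A = V Uᵀ C^{−1/2}` where `C^{−1/2} M = U Sig Vᵀ` is a singular value decomposition. -/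
theorem trace_max_over_C_orthogonal
    {d : ℕ} (C M R : Matrix (Fin d) (Fin d) ℝ)
    (hC : C.PosDef) (hR : R.PosDef) (hRC : R * R = C)
    (U Sig V : Matrix (Fin d) (Fin d) ℝ)
    (hU : U * Uᵀ = 1) (hV : V * Vᵀ = 1)
    (hSigdiag : ∀ i j, i ≠ j → Sig i j = 0) (hSignonneg : ∀ i, 0 ≤ Sig i i)
    (hSVD : R⁻¹ * M = U * Sig * Vᵀ) :
    IsGreatest {t : ℝ | ∃ A : Matrix (Fin d) (Fin d) ℝ, A * C * Aᵀ = 1 ∧ t = (A * M).trace}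
      (∑ i, singularValues (R⁻¹ * M) i) ∧
    ((V * Uᵀ * R⁻¹) * M).trace = ∑ i, singularValues (R⁻¹ * M) i ∧
    (V * Uᵀ * R⁻¹) * C * (V * Uᵀ * R⁻¹)ᵀ = 1 :=
  trace_max_over_C_orthogonal_general C M R hR hRC U Sig V hU hV hSigdiag hSignonneg hSVD
end

section
/- (Correspondence analysis recovers the principal functions) Under the principal-function hypotheses, let P be the |𝒳| × |𝒴| matrix with entries P_{X,Y}(x,y), let D_X = diag(p_X), D_Y = diag(p_Y), and let Q = D_X^{−1/2} (P − p_X p_Yᵀ) D_Y^{−1/2}, where p_X and p_Y are viewed as column vectors. Let F be the |𝒳| × d matrix with columns f_1, …, f_d and G the |𝒴| × d matrix with columns g_1, …, g_d, and let Λ^{1/2} = diag(√λ_1, …, √λ_d). Then Q = (D_X^{1/2} F) Λ^{1/2} (D_Y^{1/2} G)ᵀ, and the matrices D_X^{1/2} F and D_Y^{1/2} G have orthonormal columns; consequently √λ_1, …, √λ_d are singular values of Q with corresponding left singular vectors D_X^{1/2} f_i and right singular vectors D_Y^{1/2} g_i. -/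
open scoped BigOperators
open Matrix

section Aux

variable {𝒳 𝒴 : Type} [Fintype 𝒳] [Fintype 𝒴] {d : ℕ} (S : PrincipalSystem 𝒳 𝒴 d)

lemma PS.sum_pY_g {i : Fin (d + 1)} (hi : i ≠ 0) : ∑ y, pYm S.P y * S.g i y = 0 := by
  have h := S.orth_g 0 i
  rw [if_neg (fun h => hi h.symm)] at h
  simpa [S.g_zero] using h

lemma PS.sum_pX_f {i : Fin (d + 1)} (hi : i ≠ 0) : ∑ x, pXm S.P x * S.f i x = 0 := by
  have h := S.orth_f 0 i
  rw [if_neg (fun h => hi h.symm)] at h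
  simpa [S.f_zero] using h

lemma PS.sum_Pg {i : Fin (d + 1)} (hi : i ≠ 0) (x : 𝒳) :
    ∑ y, S.P x y * S.g i y = pXm S.P x * (Real.sqrt (S.lam i) * S.f i x) := by
  have h := S.cond_g i hi x
  rw [div_eq_iff (S.pX_pos x).ne'] at h
  rw [h]; ring

lemma PS.sum_Pf {i : Fin (d + 1)} (hi : i ≠ 0) (y : 𝒴) :
    ∑ x, S.P x y * S.f i x = pYm S.P y * (Real.sqrt (S.lam i) * S.g i y) := by
  have h := S.cond_f i hi y
  rw [div_eq_iff (S.pY_pos y).ne'] at h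
  rw [h]; ring

lemma PS.key (x : 𝒳) (y : 𝒴) :
    S.P x y = pXm S.P x * pYm S.P y * ∑ i, Real.sqrt (S.lam i) * (S.f i x * S.g i y) := by
  obtain ⟨β, hβ⟩ := S.basis_g (fun y => S.P x y / (pXm S.P x * pYm S.P y))
  have hcoef : ∀ i, β i = Real.sqrt (S.lam i) * S.f i x := by
    intro i
    have h1 : ∑ y, pYm S.P y * (S.g i y * (S.P x y / (pXm S.P x * pYm S.P y))) = β i := by
      calc ∑ y, pYm S.P y * (S.g i y * (S.P x y / (pXm S.P x * pYm S.P y)))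
          = ∑ y, pYm S.P y * (S.g i y * ∑ j, β j * S.g j y) := by
            refine Finset.sum_congr rfl fun y _ => ?_
            rw [← hβ y]
        _ = ∑ j, β j * ∑ y, pYm S.P y * (S.g i y * S.g j y) := by
            simp_rw [Finset.mul_sum]
            rw [Finset.sum_comm]
            exact Finset.sum_congr rfl fun j _ =>
              Finset.sum_congr rfl fun y _ => by ring
        _ = β i := by
            simp_rw [S.orth_g i]
            simp
    have h2 : ∑ y, pYm S.P y * (S.g i y * (S.P x y / (pXm S.P x * pYm S.P y)))
        = Real.sqrt (S.lam i) * S.f i x := by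
      have hsimp : ∀ y, pYm S.P y * (S.g i y * (S.P x y / (pXm S.P x * pYm S.P y)))
          = (S.P x y * S.g i y) / pXm S.P x := by
        intro y
        field_simp [(S.pY_pos y).ne', (S.pX_pos x).ne']
      rw [Finset.sum_congr rfl fun y _ => hsimp y, ← Finset.sum_div]
      by_cases hi : i = 0
      · subst hi
        simp [S.g_zero, S.f_zero, S.lam_zero]
        have : (∑ y, S.P x y) = pXm S.P x := rfl
        rw [this, div_self (S.pX_pos x).ne']
      · rw [PS.sum_Pg S hi x, mul_div_cancel_left₀ _ (S.pX_pos x).ne']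
    rw [← h1, h2]
  have h3 : S.P x y = (pXm S.P x * pYm S.P y) * ∑ i, β i * S.g i y := by
    have h := hβ y
    rw [div_eq_iff (mul_pos (S.pX_pos x) (S.pY_pos y)).ne'] at h
    rw [h]; ring
  rw [h3]
  congr 1
  exact Finset.sum_congr rfl fun i _ => by rw [hcoef i]; ring

lemma PS.sum_split (h : Fin (d + 1) → ℝ) :
    ∑ i, h i = h 0 + ∑ i : {i : Fin (d + 1) // i ≠ 0}, h i.1 := by
  classical
  rw [Fintype.sum_eq_add_sum_compl 0 h]
  congr 1
  exact Finset.sum_subtype ({0}ᶜ : Finset (Fin (d + 1))) (fun x => by simp) h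

end Aux


lemma PS.aux1 (a b s : ℝ) (ha : a ≠ 0) (hb : b ≠ 0) :
    a⁻¹ * (a * a * (b * b) * (1 + s) - a * a * (b * b)) * b⁻¹ = a * b * s := by
  field_simp
  ring

lemma PS.aux2 (a t : ℝ) (ha : a ≠ 0) : a⁻¹ * (a * a * t) = a * t := by
  field_simp

/-- **Correspondence analysis recovers the principal functions.**
With `Q = D_X^{−1/2} (P − p_X p_Yᵀ) D_Y^{−1/2}`, the matrix `F` of nonzero principal
functions of `X` and the matrix `G` of nonzero principal functions of `Y` satisfy
`Q = (D_X^{1/2} F) Λ^{1/2} (D_Y^{1/2} G)ᵀ`, the matrices `D_X^{1/2} F` and `D_Y^{1/2} G`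
have orthonormal columns, and `√(lam i)` are singular values of `Q` with left singular
vectors `D_X^{1/2} f i` and right singular vectors `D_Y^{1/2} g i`. -/
theorem correspondence_analysis_eq_pic
    {𝒳 𝒴 : Type} [Fintype 𝒳] [Fintype 𝒴] [DecidableEq 𝒳] [DecidableEq 𝒴] {d : ℕ}
    (S : PrincipalSystem 𝒳 𝒴 d)
    (Q : Matrix 𝒳 𝒴 ℝ)
    (hQ : Q = Matrix.diagonal (fun x => (Real.sqrt (pXm S.P x))⁻¹) *
        (Matrix.of S.P - Matrix.vecMulVec (pXm S.P) (pYm S.P)) *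
        Matrix.diagonal (fun y => (Real.sqrt (pYm S.P y))⁻¹))
    (F : Matrix 𝒳 {i : Fin (d + 1) // i ≠ 0} ℝ) (hF : F = Matrix.of fun x i => S.f i.1 x)
    (G : Matrix 𝒴 {i : Fin (d + 1) // i ≠ 0} ℝ) (hG : G = Matrix.of fun y i => S.g i.1 y) :
    (Q = (Matrix.diagonal (fun x => Real.sqrt (pXm S.P x)) * F) *
        Matrix.diagonal (fun (i : {i : Fin (d + 1) // i ≠ 0}) => Real.sqrt (S.lam i.1)) *
        (Matrix.diagonal (fun y => Real.sqrt (pYm S.P y)) * G)ᵀ) ∧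
    ((Matrix.diagonal (fun x => Real.sqrt (pXm S.P x)) * F)ᵀ *
        (Matrix.diagonal (fun x => Real.sqrt (pXm S.P x)) * F) = 1) ∧
    ((Matrix.diagonal (fun y => Real.sqrt (pYm S.P y)) * G)ᵀ *
        (Matrix.diagonal (fun y => Real.sqrt (pYm S.P y)) * G) = 1) ∧
    (∀ i : {i : Fin (d + 1) // i ≠ 0},
      Q.mulVec (fun y => Real.sqrt (pYm S.P y) * S.g i.1 y)
        = fun x => Real.sqrt (S.lam i.1) * (Real.sqrt (pXm S.P x) * S.f i.1 x)) ∧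
    (∀ i : {i : Fin (d + 1) // i ≠ 0},
      Qᵀ.mulVec (fun x => Real.sqrt (pXm S.P x) * S.f i.1 x)
        = fun y => Real.sqrt (S.lam i.1) * (Real.sqrt (pYm S.P y) * S.g i.1 y)) := by
  subst hQ hF hG
  have hx : ∀ x : 𝒳, Real.sqrt (pXm S.P x) ≠ 0 :=
    fun x => (Real.sqrt_pos.mpr (S.pX_pos x)).ne'
  have hy : ∀ y : 𝒴, Real.sqrt (pYm S.P y) ≠ 0 :=
    fun y => (Real.sqrt_pos.mpr (S.pY_pos y)).ne'
  have hx2 : ∀ x : 𝒳, Real.sqrt (pXm S.P x) * Real.sqrt (pXm S.P x) = pXm S.P x :=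
    fun x => Real.mul_self_sqrt (S.pX_pos x).le
  have hy2 : ∀ y : 𝒴, Real.sqrt (pYm S.P y) * Real.sqrt (pYm S.P y) = pYm S.P y :=
    fun y => Real.mul_self_sqrt (S.pY_pos y).le
  have hDF : Matrix.diagonal (fun x => Real.sqrt (pXm S.P x)) *
      (Matrix.of fun x (i : {i : Fin (d + 1) // i ≠ 0}) => S.f i.1 x)
      = Matrix.of (fun x (i : {i : Fin (d + 1) // i ≠ 0}) =>
          Real.sqrt (pXm S.P x) * S.f i.1 x) := by
    ext x i
    rw [Matrix.diagonal_mul]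
    rfl
  have hDG : Matrix.diagonal (fun y => Real.sqrt (pYm S.P y)) *
      (Matrix.of fun y (i : {i : Fin (d + 1) // i ≠ 0}) => S.g i.1 y)
      = Matrix.of (fun y (i : {i : Fin (d + 1) // i ≠ 0}) =>
          Real.sqrt (pYm S.P y) * S.g i.1 y) := by
    ext y i
    rw [Matrix.diagonal_mul]
    rfl
  refine ⟨?_, ?_, ?_, ?_, ?_⟩
  · rw [hDF, hDG]
    ext x y
    conv_rhs => rw [Matrix.mul_apply]
    simp only [Matrix.mul_diagonal, Matrix.diagonal_mul, Matrix.transpose_apply,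
      Matrix.sub_apply, Matrix.vecMulVec_apply, Matrix.of_apply]
    rw [PS.key S x y,
      PS.sum_split (fun i => Real.sqrt (S.lam i) * (S.f i x * S.g i y))]
    simp only [S.lam_zero, S.f_zero, S.g_zero, Real.sqrt_one, one_mul, mul_one]
    rw [show (∑ i : {i : Fin (d + 1) // i ≠ 0},
          Real.sqrt (pXm S.P x) * S.f i.1 x * Real.sqrt (S.lam i.1)
            * (Real.sqrt (pYm S.P y) * S.g i.1 y))
          = Real.sqrt (pXm S.P x) * Real.sqrt (pYm S.P y) *
            ∑ i : {i : Fin (d + 1) // i ≠ 0},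
              Real.sqrt (S.lam i.1) * (S.f i.1 x * S.g i.1 y) by
        rw [Finset.mul_sum]
        exact Finset.sum_congr rfl fun i _ => by ring]
    have h := PS.aux1 (Real.sqrt (pXm S.P x)) (Real.sqrt (pYm S.P y))
      (∑ i : {i : Fin (d + 1) // i ≠ 0}, Real.sqrt (S.lam i.1) * (S.f i.1 x * S.g i.1 y))
      (hx x) (hy y)
    rw [hx2 x, hy2 y] at h
    linear_combination h
  · rw [hDF]
    ext i j
    rw [Matrix.mul_apply]
    simp only [Matrix.transpose_apply, Matrix.of_apply, Matrix.one_apply]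
    calc ∑ x, Real.sqrt (pXm S.P x) * S.f i.1 x * (Real.sqrt (pXm S.P x) * S.f j.1 x)
        = ∑ x, pXm S.P x * (S.f i.1 x * S.f j.1 x) := by
          refine Finset.sum_congr rfl fun x _ => ?_
          conv_rhs => rw [← hx2 x]
          ring
      _ = if i = j then 1 else 0 := by
          rw [S.orth_f i.1 j.1]
          simp [Subtype.ext_iff]
  · rw [hDG]
    ext i j
    rw [Matrix.mul_apply]
    simp only [Matrix.transpose_apply, Matrix.of_apply, Matrix.one_apply]
    calc ∑ y, Real.sqrt (pYm S.P y) * S.g i.1 y * (Real.sqrt (pYm S.P y) * S.g j.1 y)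
        = ∑ y, pYm S.P y * (S.g i.1 y * S.g j.1 y) := by
          refine Finset.sum_congr rfl fun y _ => ?_
          conv_rhs => rw [← hy2 y]
          ring
      _ = if i = j then 1 else 0 := by
          rw [S.orth_g i.1 j.1]
          simp [Subtype.ext_iff]
  · intro i
    funext x
    simp only [Matrix.mulVec, dotProduct, Matrix.mul_diagonal, Matrix.diagonal_mul,
      Matrix.sub_apply, Matrix.vecMulVec_apply, Matrix.of_apply]
    have h1 : ∀ y, (Real.sqrt (pXm S.P x))⁻¹ * (S.P x y - pXm S.P x * pYm S.P y)
          * (Real.sqrt (pYm S.P y))⁻¹ * (Real.sqrt (pYm S.P y) * S.g i.1 y)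
        = (Real.sqrt (pXm S.P x))⁻¹ * ((S.P x y - pXm S.P x * pYm S.P y) * S.g i.1 y) := by
      intro y
      calc _ = (Real.sqrt (pXm S.P x))⁻¹ * ((S.P x y - pXm S.P x * pYm S.P y) * S.g i.1 y)
            * ((Real.sqrt (pYm S.P y))⁻¹ * Real.sqrt (pYm S.P y)) := by ring
        _ = _ := by rw [inv_mul_cancel₀ (hy y), mul_one]
    rw [Finset.sum_congr rfl fun y _ => h1 y, ← Finset.mul_sum]
    have h2 : ∑ y, (S.P x y - pXm S.P x * pYm S.P y) * S.g i.1 y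
        = pXm S.P x * (Real.sqrt (S.lam i.1) * S.f i.1 x) := by
      simp_rw [sub_mul]
      rw [Finset.sum_sub_distrib, PS.sum_Pg S i.2 x,
        show (∑ y, pXm S.P x * pYm S.P y * S.g i.1 y)
            = pXm S.P x * ∑ y, pYm S.P y * S.g i.1 y by
          rw [Finset.mul_sum]
          exact Finset.sum_congr rfl fun y _ => by ring,
        PS.sum_pY_g S i.2, mul_zero, sub_zero]
    rw [h2]
    have h := PS.aux2 (Real.sqrt (pXm S.P x)) (Real.sqrt (S.lam i.1) * S.f i.1 x) (hx x)
    rw [hx2 x] at h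
    linear_combination h
  · intro i
    funext y
    simp only [Matrix.mulVec, dotProduct, Matrix.transpose_apply, Matrix.mul_diagonal,
      Matrix.diagonal_mul, Matrix.sub_apply, Matrix.vecMulVec_apply, Matrix.of_apply]
    have h1 : ∀ x, (Real.sqrt (pXm S.P x))⁻¹ * (S.P x y - pXm S.P x * pYm S.P y)
          * (Real.sqrt (pYm S.P y))⁻¹ * (Real.sqrt (pXm S.P x) * S.f i.1 x)
        = (Real.sqrt (pYm S.P y))⁻¹ * ((S.P x y - pXm S.P x * pYm S.P y) * S.f i.1 x) := by
      intro x
      calc _ = (Real.sqrt (pYm S.P y))⁻¹ * ((S.P x y - pXm S.P x * pYm S.P y) * S.f i.1 x)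
            * ((Real.sqrt (pXm S.P x))⁻¹ * Real.sqrt (pXm S.P x)) := by ring
        _ = _ := by rw [inv_mul_cancel₀ (hx x), mul_one]
    rw [Finset.sum_congr rfl fun x _ => h1 x, ← Finset.mul_sum]
    have h2 : ∑ x, (S.P x y - pXm S.P x * pYm S.P y) * S.f i.1 x
        = pYm S.P y * (Real.sqrt (S.lam i.1) * S.g i.1 y) := by
      simp_rw [sub_mul]
      rw [Finset.sum_sub_distrib, PS.sum_Pf S i.2 y,
        show (∑ x, pXm S.P x * pYm S.P y * S.f i.1 x)
            = pYm S.P y * ∑ x, pXm S.P x * S.f i.1 x by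
          rw [Finset.mul_sum]
          exact Finset.sum_congr rfl fun x _ => by ring,
        PS.sum_pX_f S i.2, mul_zero, sub_zero]
    rw [h2]
    have h := PS.aux2 (Real.sqrt (pYm S.P y)) (Real.sqrt (S.lam i.1) * S.g i.1 y) (hy y)
    rw [hy2 y] at h
    linear_combination h
end

section
/- (Accuracy-ratio comparison of two models) Let D ∈ ℝ^{m×m} be diagonal with strictly positive diagonal entries, let G₁, G₂ ∈ ℝ^{m×m} satisfy G₁ᵀ D G₁ = I_m and G₂ᵀ D G₂ = I_m, and let Λ₁, Λ₂ ∈ ℝ^{m×m} be diagonal with strictly positive diagonal entries. For h ∈ ℝ^m define a(h) = G₁ᵀ D h, b(h) = G₂ᵀ D h, Acc₁(h) = a(h)ᵀ Λ₁ a(h) and Acc₂(h) = b(h)ᵀ Λ₂ b(h). Then the supremum over nonzero h ∈ ℝ^m of Acc₁(h) / Acc₂(h) equals σ₁², where σ₁ is the largest singular value of the matrix M = Λ₁^{1/2} G₁ᵀ D G₂ Λ₂^{−1/2}. -/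
open scoped BigOperators
open Matrix

/-! Substituting `y = Λ₂^{1/2} G₂ᵀ D h`, which is an invertible change of variables because
`G₂ᵀ D G₂ = I`, turns `Acc₂(h)` into `‖y‖²` and `Acc₁(h)` into `‖M y‖²`. The accuracy ratio is
therefore the Rayleigh quotient of `MᵀM` at `y`, whose supremum over `y ≠ 0` is the largest
eigenvalue of `MᵀM`, attained at a corresponding eigenvector; that eigenvalue is `σ₁²`. -/

open scoped MatrixOrder

namespace Matrix

variable {m n : Type*} [Fintype n]

def rayleighQuotients (A : Matrix n n ℝ) : Set ℝ :=
  {t | ∃ y : n → ℝ, y ≠ 0 ∧ t = y ⬝ᵥ A *ᵥ y / (y ⬝ᵥ y)}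

theorem dotProduct_mulVec_self_eq_conjTranspose_mul_self [Fintype m] (M : Matrix m n ℝ)
    (y : n → ℝ) : (M *ᵥ y) ⬝ᵥ (M *ᵥ y) = y ⬝ᵥ (Mᴴ * M) *ᵥ y := by
  rw [conjTranspose_eq_transpose_of_trivial, ← mulVec_mulVec, dotProduct_mulVec y,
    vecMul_transpose]

theorem dotProduct_diagonal_mulVec_self_eq_sqrt [DecidableEq n] {l : n → ℝ} (hl : ∀ i, 0 ≤ l i)
    (v : n → ℝ) :
    v ⬝ᵥ diagonal l *ᵥ v
      = (diagonal (fun i => √(l i)) *ᵥ v) ⬝ᵥ (diagonal (fun i => √(l i)) *ᵥ v) := by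
  simp only [dotProduct, mulVec_diagonal]
  refine Finset.sum_congr rfl fun i _ => ?_
  linear_combination (-(v i) ^ 2) * Real.mul_self_sqrt (hl i)

theorem diagonal_mul_diagonal_inv [DecidableEq n] {s : n → ℝ} (hs : ∀ i, s i ≠ 0) :
    diagonal s * diagonal (fun i => (s i)⁻¹) = 1 := by
  rw [diagonal_mul_diagonal, ← diagonal_one]
  exact congrArg diagonal (funext fun i => mul_inv_cancel₀ (hs i))

theorem rayleighQuotients_eq_of_mul_eq_one [DecidableEq n] (A : Matrix n n ℝ)
    {P Q : Matrix n n ℝ} (hPQ : P * Q = 1) :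
    A.rayleighQuotients = {t | ∃ h : n → ℝ, h ≠ 0 ∧
      t = (P *ᵥ h) ⬝ᵥ A *ᵥ (P *ᵥ h) / ((P *ᵥ h) ⬝ᵥ (P *ᵥ h))} := by
  ext t
  constructor
  · rintro ⟨y, hy, rfl⟩
    refine ⟨Q *ᵥ y, fun hQy => hy ?_, by rw [mulVec_mulVec, hPQ, one_mulVec]⟩
    rw [← one_mulVec y, ← hPQ, ← mulVec_mulVec, hQy, mulVec_zero]
  · rintro ⟨h, hh, rfl⟩
    refine ⟨P *ᵥ h, fun hPh => hh ?_, rfl⟩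
    rw [← one_mulVec h, ← mul_eq_one_comm.mp hPQ, ← mulVec_mulVec, hPh, mulVec_zero]

theorem IsHermitian.dotProduct_mulVec_le [DecidableEq n] {A : Matrix n n ℝ} (hA : A.IsHermitian)
    {c : ℝ} (hc : ∀ i, hA.eigenvalues i ≤ c) (y : n → ℝ) :
    y ⬝ᵥ A *ᵥ y ≤ c * (y ⬝ᵥ y) := by
  have hAc : A ≤ algebraMap ℝ _ c := by
    refine le_algebraMap_of_spectrum_le ?_ hA
    rw [hA.spectrum_real_eq_range_eigenvalues]
    rintro _ ⟨i, rfl⟩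
    exact hc i
  simpa [sub_mulVec, Algebra.algebraMap_eq_smul_one, smul_mulVec, dotProduct_smul] using
    (le_iff.mp hAc).dotProduct_mulVec_nonneg y

theorem IsHermitian.isGreatest_rayleighQuotients [DecidableEq n] {A : Matrix n n ℝ}
    (hA : A.IsHermitian) {c : ℝ} (hc : IsGreatest (Set.range hA.eigenvalues) c) :
    IsGreatest A.rayleighQuotients c := by
  obtain ⟨⟨j, rfl⟩, hmax⟩ := hc
  constructor
  · set v : n → ℝ := ⇑(hA.eigenvectorBasis j)
    have hv : v ≠ 0 := fun h0 =>
      hA.eigenvectorBasis.orthonormal.ne_zero j (by ext i; exact congrFun h0 i)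
    refine ⟨v, hv, ?_⟩
    rw [hA.mulVec_eigenvectorBasis j, dotProduct_smul, smul_eq_mul, mul_div_assoc,
      div_self (dotProduct_self_eq_zero.not.mpr hv), mul_one]
  · rintro _ ⟨y, hy, rfl⟩
    rw [div_le_iff₀ (by simpa using dotProduct_star_self_pos_iff.mpr hy)]
    exact hA.dotProduct_mulVec_le (fun i => hmax ⟨i, rfl⟩) y

theorem isGreatest_eigenvalues_of_isGreatest_singularValues [Fintype m] [DecidableEq n]
    {M : Matrix m n ℝ} {σ : ℝ} (hσ : IsGreatest (Set.range (singularValues M)) σ) :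
    IsGreatest (Set.range (isHermitian_conjTranspose_mul_self M).eigenvalues) (σ ^ 2) := by
  have hmono : MonotoneOn (fun x : ℝ => x ^ 2) (Set.range (singularValues M)) :=
    pow_left_monotoneOn.mono fun _ ⟨i, hi⟩ => hi ▸ Real.sqrt_nonneg _
  have hsq := hmono.map_isGreatest hσ
  have hcomp : (fun x : ℝ => x ^ 2) ∘ singularValues M
      = (isHermitian_conjTranspose_mul_self M).eigenvalues :=
    funext fun i => Real.sq_sqrt (eigenvalues_conjTranspose_mul_self_nonneg M i)
  rwa [← Set.range_comp, hcomp] at hsq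

end Matrix

theorem accuracy_ratio_eq_sq_largest_singular_value_general
    {m : ℕ} (dvec l1 l2 : Fin m → ℝ)
    (hl1 : ∀ i, 0 < l1 i) (hl2 : ∀ i, 0 < l2 i)
    (G1 G2 : Matrix (Fin m) (Fin m) ℝ)
    (hG2 : G2ᵀ * Matrix.diagonal dvec * G2 = 1)
    (M : Matrix (Fin m) (Fin m) ℝ)
    (hM : M = Matrix.diagonal (fun i => Real.sqrt (l1 i)) * G1ᵀ * Matrix.diagonal dvec *
        G2 * Matrix.diagonal (fun i => (Real.sqrt (l2 i))⁻¹))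
    (σ₁ : ℝ) (hσ₁ : IsGreatest (Set.range (singularValues M)) σ₁) :
    sSup {t : ℝ | ∃ h : Fin m → ℝ, h ≠ 0 ∧
        t = ((G1ᵀ * Matrix.diagonal dvec).mulVec h ⬝ᵥ
              (Matrix.diagonal l1).mulVec ((G1ᵀ * Matrix.diagonal dvec).mulVec h)) /
            ((G2ᵀ * Matrix.diagonal dvec).mulVec h ⬝ᵥ
              (Matrix.diagonal l2).mulVec ((G2ᵀ * Matrix.diagonal dvec).mulVec h))}
      = σ₁ ^ 2 := by
  set D := diagonal dvec
  set S := diagonal fun i => √(l2 i)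
  set Sinv := diagonal fun i => (√(l2 i))⁻¹
  set P := S * (G2ᵀ * D)
  have hS : S * Sinv = 1 := diagonal_mul_diagonal_inv fun i => (Real.sqrt_pos.2 (hl2 i)).ne'
  have hPQ : P * (G2 * Sinv) = 1 := by
    rw [mul_assoc, ← mul_assoc _ G2, hG2, one_mul, hS]
  have hMP : M * P = diagonal (fun i => √(l1 i)) * (G1ᵀ * D) := by
    simp only [hM, P, mul_assoc]
    rw [← mul_assoc Sinv S, mul_eq_one_comm.mp hS, one_mul, mul_eq_one_comm.mp hG2, mul_one]
  have hnum : ∀ h, (G1ᵀ * D) *ᵥ h ⬝ᵥ diagonal l1 *ᵥ (G1ᵀ * D) *ᵥ h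
      = (P *ᵥ h) ⬝ᵥ (Mᴴ * M) *ᵥ (P *ᵥ h) := fun h => by
    rw [dotProduct_diagonal_mulVec_self_eq_sqrt (fun i => (hl1 i).le), mulVec_mulVec, ← hMP,
      ← mulVec_mulVec, dotProduct_mulVec_self_eq_conjTranspose_mul_self]
  have hden : ∀ h, (G2ᵀ * D) *ᵥ h ⬝ᵥ diagonal l2 *ᵥ (G2ᵀ * D) *ᵥ h = (P *ᵥ h) ⬝ᵥ (P *ᵥ h) :=
    fun h => by rw [dotProduct_diagonal_mulVec_self_eq_sqrt (fun i => (hl2 i).le), mulVec_mulVec]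
  simp only [hnum, hden]
  rw [← rayleighQuotients_eq_of_mul_eq_one _ hPQ]
  exact ((isHermitian_conjTranspose_mul_self M).isGreatest_rayleighQuotients
    (isGreatest_eigenvalues_of_isGreatest_singularValues hσ₁)).csSup_eq

/-- **Accuracy-ratio comparison of two models.**  With `D` diagonal positive, `G₁ᵀ D G₁ = I`,
`G₂ᵀ D G₂ = I`, `Λ₁, Λ₂` diagonal positive, `a(h) = G₁ᵀ D h`, `b(h) = G₂ᵀ D h`,
`Acc₁(h) = a(h)ᵀ Λ₁ a(h)`, `Acc₂(h) = b(h)ᵀ Λ₂ b(h)`, the supremum over nonzero `h` of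
`Acc₁(h)/Acc₂(h)` equals `σ₁²`, where `σ₁` is the largest singular value of
`M = Λ₁^{1/2} G₁ᵀ D G₂ Λ₂^{−1/2}`. -/
theorem accuracy_ratio_eq_sq_largest_singular_value
    {m : ℕ} (dvec l1 l2 : Fin m → ℝ)
    (hd : ∀ i, 0 < dvec i) (hl1 : ∀ i, 0 < l1 i) (hl2 : ∀ i, 0 < l2 i)
    (G1 G2 : Matrix (Fin m) (Fin m) ℝ)
    (hG1 : G1ᵀ * Matrix.diagonal dvec * G1 = 1)
    (hG2 : G2ᵀ * Matrix.diagonal dvec * G2 = 1)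
    (M : Matrix (Fin m) (Fin m) ℝ)
    (hM : M = Matrix.diagonal (fun i => Real.sqrt (l1 i)) * G1ᵀ * Matrix.diagonal dvec *
        G2 * Matrix.diagonal (fun i => (Real.sqrt (l2 i))⁻¹))
    (σ₁ : ℝ) (hσ₁ : IsGreatest (Set.range (singularValues M)) σ₁) :
    sSup {t : ℝ | ∃ h : Fin m → ℝ, h ≠ 0 ∧
        t = ((G1ᵀ * Matrix.diagonal dvec).mulVec h ⬝ᵥ
              (Matrix.diagonal l1).mulVec ((G1ᵀ * Matrix.diagonal dvec).mulVec h)) /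
            ((G2ᵀ * Matrix.diagonal dvec).mulVec h ⬝ᵥ
              (Matrix.diagonal l2).mulVec ((G2ᵀ * Matrix.diagonal dvec).mulVec h))}
      = σ₁ ^ 2 :=
  accuracy_ratio_eq_sq_largest_singular_value_general dvec l1 l2 hl1 hl2 G1 G2 hG2 M hM σ₁ hσ₁
end

section
/- Let X and Y be random variables on finite alphabets 𝒳 and 𝒴 with joint pmf P_{X,Y} having strictly positive marginals, and let h : 𝒴 → ℝ satisfy E[h(Y)²] = 1. Then the supremum over functions f : 𝒳 → ℝ with E[f(X)²] = 1 of E[f(X) h(Y)] equals √(E[(E[h(Y)|X])²]); this value lies in the interval [0, 1], and it equals 1 if and only if there exists f : 𝒳 → ℝ with f(X) = h(Y) almost surely with respect to P_{X,Y}. -/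
open scoped BigOperators

private lemma cs_w {ι : Type} [Fintype ι] (w a b : ι → ℝ) (hw : ∀ i, 0 ≤ w i) :
    (∑ i, w i * (a i * b i)) ^ 2 ≤ (∑ i, w i * a i ^ 2) * (∑ i, w i * b i ^ 2) := by
  have key := Finset.sum_mul_sq_le_sq_mul_sq Finset.univ
    (fun i => Real.sqrt (w i) * a i) (fun i => Real.sqrt (w i) * b i)
  have e1 : ∑ i, (Real.sqrt (w i) * a i) * (Real.sqrt (w i) * b i)
      = ∑ i, w i * (a i * b i) := by
    refine Finset.sum_congr rfl fun i _ => ?_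
    rw [show (Real.sqrt (w i) * a i) * (Real.sqrt (w i) * b i)
        = (Real.sqrt (w i) * Real.sqrt (w i)) * (a i * b i) from by ring,
      Real.mul_self_sqrt (hw i)]
  have e2 : ∑ i, (Real.sqrt (w i) * a i) ^ 2 = ∑ i, w i * a i ^ 2 := by
    refine Finset.sum_congr rfl fun i _ => ?_
    rw [mul_pow, Real.sq_sqrt (hw i)]
  have e3 : ∑ i, (Real.sqrt (w i) * b i) ^ 2 = ∑ i, w i * b i ^ 2 := by
    refine Finset.sum_congr rfl fun i _ => ?_
    rw [mul_pow, Real.sq_sqrt (hw i)]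
  rw [e1, e2, e3] at key
  exact key

private lemma cs_w1 {ι : Type} [Fintype ι] (w b : ι → ℝ) (hw : ∀ i, 0 ≤ w i) :
    (∑ i, w i * b i) ^ 2 ≤ (∑ i, w i) * (∑ i, w i * b i ^ 2) := by
  have := cs_w w (fun _ => 1) b hw
  simpa using this

/-- For `h` with `E[h(Y)²] = 1`, the supremum over `f` with
`E[f(X)²] = 1` of `E[f(X) h(Y)]` equals `√(E[(E[h(Y)|X])²])`; this value lies in `[0,1]`,
and equals `1` iff there is `f` with `f(X) = h(Y)` almost surely (i.e. `f x = h y`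
whenever `P(x,y) > 0`). -/
theorem sup_correlation_eq_sqrt_condexp_sq
    {𝒳 𝒴 : Type} [Fintype 𝒳] [Fintype 𝒴]
    (P : 𝒳 → 𝒴 → ℝ)
    (hP0 : ∀ x y, 0 ≤ P x y)
    (hP1 : ∑ x, ∑ y, P x y = 1)
    (hpX : ∀ x, 0 < ∑ y, P x y)
    (hpY : ∀ y, 0 < ∑ x, P x y)
    (h : 𝒴 → ℝ)
    (hh : ∑ y, (∑ x, P x y) * h y ^ 2 = 1) :
    sSup {t : ℝ | ∃ f : 𝒳 → ℝ,
        (∑ x, (∑ y, P x y) * f x ^ 2) = 1 ∧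
        t = ∑ x, ∑ y, P x y * (f x * h y)}
      = Real.sqrt (∑ x, (∑ y, P x y) * ((∑ y, P x y * h y) / (∑ y, P x y)) ^ 2) ∧
    Real.sqrt (∑ x, (∑ y, P x y) * ((∑ y, P x y * h y) / (∑ y, P x y)) ^ 2)
      ∈ Set.Icc (0 : ℝ) 1 ∧
    (Real.sqrt (∑ x, (∑ y, P x y) * ((∑ y, P x y * h y) / (∑ y, P x y)) ^ 2) = 1
      ↔ ∃ f : 𝒳 → ℝ, ∀ x y, 0 < P x y → f x = h y) := by
  -- notation
  set p : 𝒳 → ℝ := fun x => ∑ y, P x y with hpdef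
  set g : 𝒳 → ℝ := fun x => (∑ y, P x y * h y) / (∑ y, P x y) with hgdef
  have hp : ∀ x, p x ≠ 0 := fun x => (hpX x).ne'
  have hs : ∀ x, ∑ y, P x y * h y = p x * g x := by
    intro x
    have hpx : (∑ y, P x y) ≠ 0 := hp x
    rw [hgdef, show p x = ∑ y, P x y from rfl]
    dsimp only
    field_simp
  set S : ℝ := ∑ x, p x * g x ^ 2 with hSdef
  have hS0 : (0:ℝ) ≤ S :=
    Finset.sum_nonneg fun x _ => mul_nonneg (hpX x).le (sq_nonneg _)
  -- pointwise bound : p x * g x ^ 2 ≤ ∑ y, P x y * h y ^ 2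
  have hpt : ∀ x, p x * g x ^ 2 ≤ ∑ y, P x y * h y ^ 2 := by
    intro x
    have hcs := cs_w1 (P x) h (hP0 x)
    rw [hs x] at hcs
    have hpx := hpX x
    nlinarith [sq_nonneg (g x)]
  -- total second moment
  have hT : ∑ x, ∑ y, P x y * h y ^ 2 = 1 := by
    rw [Finset.sum_comm]
    calc ∑ y, ∑ x, P x y * h y ^ 2 = ∑ y, (∑ x, P x y) * h y ^ 2 := by
          refine Finset.sum_congr rfl fun y _ => ?_
          rw [Finset.sum_mul]
      _ = 1 := hh
  have hS1 : S ≤ 1 := by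
    calc S ≤ ∑ x, ∑ y, P x y * h y ^ 2 := Finset.sum_le_sum fun x _ => hpt x
      _ = 1 := hT
  -- value identity
  have hval : ∀ f : 𝒳 → ℝ, ∑ x, ∑ y, P x y * (f x * h y) = ∑ x, p x * (f x * g x) := by
    intro f
    refine Finset.sum_congr rfl fun x _ => ?_
    calc ∑ y, P x y * (f x * h y) = f x * ∑ y, P x y * h y := by
          rw [Finset.mul_sum]; exact Finset.sum_congr rfl fun y _ => by ring
      _ = p x * (f x * g x) := by rw [hs x]; ring
  -- IsGreatest
  have hgreat : IsGreatest {t : ℝ | ∃ f : 𝒳 → ℝ,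
      (∑ x, p x * f x ^ 2) = 1 ∧
      t = ∑ x, ∑ y, P x y * (f x * h y)} (Real.sqrt S) := by
    constructor
    · -- membership
      rcases eq_or_lt_of_le hS0 with hSz | hSpos
      · -- S = 0
        refine ⟨fun _ => 1, by simpa using hP1, ?_⟩
        have hg0 : ∀ x, p x * g x ^ 2 = 0 := by
          intro x
          have := (Finset.sum_eq_zero_iff_of_nonneg
            (fun x _ => mul_nonneg (hpX x).le (sq_nonneg (g x)))).1 hSz.symm
          exact this x (Finset.mem_univ x)
        rw [hval, ← hSz, Real.sqrt_zero]
        refine (Finset.sum_eq_zero fun x _ => ?_).symm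
        have hgx : g x = 0 := by
          have := hg0 x
          rcases mul_eq_zero.1 this with h1 | h2
          · exact absurd h1 (hp x)
          · exact pow_eq_zero_iff (by norm_num) |>.1 h2
        simp [hgx]
      · -- S > 0
        have hsq : Real.sqrt S ≠ 0 := (Real.sqrt_pos.2 hSpos).ne'
        refine ⟨fun x => g x / Real.sqrt S, ?_, ?_⟩
        · calc ∑ x, p x * (g x / Real.sqrt S) ^ 2
              = ∑ x, (p x * g x ^ 2) * (1 / S) := by
                refine Finset.sum_congr rfl fun x _ => ?_
                rw [div_pow, Real.sq_sqrt hS0]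
                · ring
              _ = S * (1 / S) := by rw [← Finset.sum_mul]
              _ = 1 := by field_simp
        · rw [hval]
          calc Real.sqrt S = S / Real.sqrt S := Real.div_sqrt.symm
            _ = (∑ x, p x * g x ^ 2) / Real.sqrt S := by rw [hSdef]
            _ = ∑ x, p x * (g x / Real.sqrt S * g x) := by
                rw [Finset.sum_div]
                exact Finset.sum_congr rfl fun x _ => by ring
    · -- upper bound
      rintro t ⟨f, hf1, rfl⟩
      rw [hval]
      have hcs := cs_w p f g fun x => (hpX x).le
      rw [hf1, one_mul] at hcs
      rcases le_or_gt (∑ x, p x * (f x * g x)) 0 with hneg | hpos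
      · exact hneg.trans (Real.sqrt_nonneg S)
      · exact (Real.le_sqrt hpos.le hS0).2 hcs
  have hsup : sSup {t : ℝ | ∃ f : 𝒳 → ℝ,
      (∑ x, p x * f x ^ 2) = 1 ∧
      t = ∑ x, ∑ y, P x y * (f x * h y)} = Real.sqrt S := hgreat.csSup_eq
  refine ⟨hsup, ⟨Real.sqrt_nonneg _, Real.sqrt_le_one.2 hS1⟩, ?_, ?_⟩
  · -- forward direction
    intro h1
    have hSeq : S = 1 := by
      have := Real.sq_sqrt hS0
      rw [h1] at this
      simpa using this.symm
    -- equality in each pointwise bound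
    have heq : ∀ x, ∑ y, P x y * h y ^ 2 - p x * g x ^ 2 = 0 := by
      have hsum0 : ∑ x, (∑ y, P x y * h y ^ 2 - p x * g x ^ 2) = 0 := by
        rw [Finset.sum_sub_distrib, hT, ← hSdef, hSeq, sub_self]
      have := (Finset.sum_eq_zero_iff_of_nonneg
        (fun x _ => sub_nonneg.2 (hpt x))).1 hsum0
      exact fun x => this x (Finset.mem_univ x)
    refine ⟨g, fun x y hxy => ?_⟩
    have hzero : ∑ y, P x y * (h y - g x) ^ 2 = 0 := by
      calc ∑ y, P x y * (h y - g x) ^ 2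
          = ∑ y, (P x y * h y ^ 2 - (2 * g x) * (P x y * h y) + g x ^ 2 * P x y) :=
            Finset.sum_congr rfl fun y _ => by ring
        _ = (∑ y, P x y * h y ^ 2) - (2 * g x) * (∑ y, P x y * h y)
              + g x ^ 2 * (∑ y, P x y) := by
            rw [Finset.sum_add_distrib, Finset.sum_sub_distrib, ← Finset.mul_sum,
              ← Finset.mul_sum]
        _ = 0 := by
            rw [hs x]
            have := heq x
            have hpx : (∑ y, P x y) = p x := rfl
            rw [hpx]
            nlinarith [this]
    have hterm : P x y * (h y - g x) ^ 2 = 0 := by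
      have := (Finset.sum_eq_zero_iff_of_nonneg
        (fun y _ => mul_nonneg (hP0 x y) (sq_nonneg (h y - g x)))).1 hzero
      exact this y (Finset.mem_univ y)
    rcases mul_eq_zero.1 hterm with h1 | h2
    · exact absurd h1 hxy.ne'
    · have := pow_eq_zero_iff (n := 2) (by norm_num) |>.1 h2
      linarith [sub_eq_zero.1 this]
  · -- backward direction
    rintro ⟨f, hf⟩
    have hsx : ∀ x, ∑ y, P x y * h y = p x * f x := by
      intro x
      rw [hpdef, Finset.sum_mul]
      refine Finset.sum_congr rfl fun y _ => ?_
      rcases (hP0 x y).eq_or_lt with h0 | h0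
      · rw [← h0]; ring
      · rw [hf x y h0]
    have hTx : ∀ x, ∑ y, P x y * h y ^ 2 = p x * f x ^ 2 := by
      intro x
      rw [hpdef, Finset.sum_mul]
      refine Finset.sum_congr rfl fun y _ => ?_
      rcases (hP0 x y).eq_or_lt with h0 | h0
      · rw [← h0]; ring
      · rw [hf x y h0]
    have hgf : ∀ x, g x = f x := by
      intro x
      rw [hgdef]
      dsimp only
      rw [hsx x]
      exact mul_div_cancel_left₀ _ (hp x)
    have hSeq : S = 1 := by
      rw [hSdef]
      calc ∑ x, p x * g x ^ 2 = ∑ x, p x * f x ^ 2 :=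
            Finset.sum_congr rfl fun x _ => by rw [hgf x]
        _ = ∑ x, ∑ y, P x y * h y ^ 2 :=
            Finset.sum_congr rfl fun x _ => (hTx x).symm
        _ = 1 := hT
    rw [hSeq, Real.sqrt_one]
end

section
/- Let X and Y be random variables on finite alphabets 𝒳 and 𝒴 with joint pmf P_{X,Y} having strictly positive marginals p_X and p_Y, let B be the |𝒳| × |𝒴| matrix with entries B_{x,y} = P_{X,Y}(x,y)/√(p_X(x) p_Y(y)), and let σ₁ ≥ σ₂ ≥ … be the singular values of B in nonincreasing order. Then for any d ≤ min(|𝒳|, |𝒴|), the minimum of E[‖f(X) − g(Y)‖₂²] over all f : 𝒳 → ℝ^d with E[f(X) f(X)ᵀ] = I_d and all g : 𝒴 → ℝ^d equals d − Σ_{i=1}^{d} σ_i². -/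
/-!
With `aᵢ = √p_X ⊙ fᵢ` and `bᵢ = √p_Y ⊙ gᵢ` the constraint says that `a₁, …, a_d` are
orthonormal in `ℓ²(𝒳)`, and the objective becomes `∑ᵢ (1 - ‖Bᵀ aᵢ‖² + ‖Bᵀ aᵢ - bᵢ‖²)`.
So the optimal `bᵢ` is `Bᵀ aᵢ`, and it remains to maximise `∑ᵢ ‖Bᵀ aᵢ‖²` over orthonormal
`d`-frames. Expanding in an eigenbasis of `BᵀB` writes this as `∑ₖ μₖ wₖ` with weights
`0 ≤ wₖ ≤ 1` of total at most `d` (two applications of Bessel), so it is at most the sum of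
the `d` largest eigenvalues `σ₁² + ⋯ + σ_d²` (Ky Fan). The bound is attained at top
eigenvectors of `BBᵀ`: applying it in both directions shows that `BBᵀ` and `BᵀB` have the
same top-`d` eigenvalue sum.
-/

open scoped BigOperators
open Matrix

open scoped RealInnerProductSpace

lemma sq_singularValues {m n : Type*} [Fintype m] [Fintype n] [DecidableEq n]
    (M : Matrix m n ℝ) (i : n) :
    singularValues M i ^ 2 = (isHermitian_conjTranspose_mul_self M).eigenvalues i :=
  Real.sq_sqrt (eigenvalues_conjTranspose_mul_self_nonneg M i)

theorem sum_mul_le_sum_castLE_of_antitone {N d : ℕ} (hd : d ≤ N) {μ w : Fin N → ℝ}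
    (hμ : Antitone μ) (hμ0 : ∀ k, 0 ≤ μ k) (hw0 : ∀ k, 0 ≤ w k) (hw1 : ∀ k, w k ≤ 1)
    (hw : ∑ k, w k ≤ d) :
    ∑ k, μ k * w k ≤ ∑ i : Fin d, μ (Fin.castLE hd i) := by
  set S := Finset.univ.map (Fin.castLEEmb hd)
  have hS : ∀ k, k ∈ S ↔ (k : ℕ) < d := fun k => by
    simp only [S, Finset.mem_map, Finset.mem_univ, true_and]
    exact ⟨by rintro ⟨i, rfl⟩; exact i.isLt, fun hk => ⟨⟨k, hk⟩, rfl⟩⟩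
  obtain ⟨c, hc0, hcS, hcSc⟩ : ∃ c, 0 ≤ c ∧ (∀ k ∈ S, c ≤ μ k) ∧ ∀ k ∉ S, μ k ≤ c := by
    by_cases h : d < N
    · refine ⟨μ ⟨d, h⟩, hμ0 _, fun k hk => hμ ?_, fun k hk => hμ ?_⟩
      · exact Fin.mk_le_mk.mpr ((hS k).1 hk).le
      · exact Fin.le_def.mpr (not_lt.mp (mt (hS k).2 hk))
    · exact ⟨0, le_rfl, fun k _ => hμ0 k, fun k hk => absurd ((hS k).2 (by omega)) hk⟩
  have hcard : (S.card : ℝ) = d := by simp [S]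
  calc ∑ k, μ k * w k = ∑ k ∈ S, μ k * w k + ∑ k ∈ Sᶜ, μ k * w k :=
        (Finset.sum_add_sum_compl S _).symm
    _ ≤ ∑ k ∈ S, (μ k - c * (1 - w k)) + ∑ k ∈ Sᶜ, c * w k := by
        refine add_le_add (Finset.sum_le_sum fun k hk => ?_) (Finset.sum_le_sum fun k hk => ?_)
        · nlinarith [hcS k hk, hw1 k]
        · exact mul_le_mul_of_nonneg_right (hcSc k (Finset.mem_compl.mp hk)) (hw0 k)
    _ = ∑ k ∈ S, μ k - c * (S.card - ∑ k, w k) := by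
        rw [← Finset.sum_add_sum_compl S w, Finset.sum_sub_distrib, ← Finset.mul_sum,
          ← Finset.mul_sum, Finset.sum_sub_distrib]
        simp only [Finset.sum_const, nsmul_eq_mul, mul_one]
        ring
    _ ≤ ∑ k ∈ S, μ k := by
        rw [hcard]; nlinarith
    _ = ∑ i : Fin d, μ (Fin.castLE hd i) := Finset.sum_map _ _ _

theorem sum_inner_sq_div_norm_sq_le_of_pairwise_orthogonal {ι E : Type*} [Fintype ι]
    [NormedAddCommGroup E] [InnerProductSpace ℝ E] {u : ι → E}
    (hu : Pairwise fun k l => ⟪u k, u l⟫ = 0) (x : E) :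
    ∑ k, ⟪u k, x⟫ ^ 2 / ‖u k‖ ^ 2 ≤ ‖x‖ ^ 2 := by
  classical
  let v : {k // u k ≠ 0} → E := fun k => ‖u k‖⁻¹ • u k
  have hv : Orthonormal ℝ v := by
    refine ⟨fun k => ?_, fun k l hkl => ?_⟩
    · simp [v, norm_smul, inv_mul_cancel₀ (norm_ne_zero_iff.mpr k.2)]
    · simp [v, inner_smul_left, inner_smul_right, hu (Subtype.coe_ne_coe.mpr hkl)]
  calc ∑ k, ⟪u k, x⟫ ^ 2 / ‖u k‖ ^ 2 = ∑ k : {k // u k ≠ 0}, ⟪v k, x⟫ ^ 2 := by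
        rw [← Finset.sum_filter_of_ne (p := fun k => u k ≠ 0) fun k _ h => ?_,
          Finset.sum_subtype (p := fun k => u k ≠ 0) _ fun k => by simp]
        · refine Finset.sum_congr rfl fun k _ => ?_
          simp [v, inner_smul_left, mul_pow, div_eq_inv_mul]
        · rintro hk; simp [hk] at h
    _ ≤ ‖x‖ ^ 2 := by simpa using hv.sum_inner_products_le x (s := Finset.univ)

namespace Matrix.IsHermitian

variable {m n : Type*} [Fintype m] [Fintype n] [DecidableEq n] {A : Matrix n n ℝ}
  (hA : A.IsHermitian)

lemma toEuclideanLin_eigenvectorBasis (k : n) :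
    toEuclideanLin A (hA.eigenvectorBasis k) = hA.eigenvalues k • hA.eigenvectorBasis k := by
  ext i
  simpa using congr_fun (hA.mulVec_eigenvectorBasis k) i

lemma inner_toEuclideanLin_eigenvectorBasis [DecidableEq m] {N : Matrix m n ℝ} (hN : Nᴴ * N = A)
    (k l : n) :
    ⟪toEuclideanLin N (hA.eigenvectorBasis k), toEuclideanLin N (hA.eigenvectorBasis l)⟫ =
      if k = l then hA.eigenvalues k else 0 := by
  rw [← LinearMap.adjoint_inner_right, ← toEuclideanLin_conjTranspose_eq_adjoint,
    ← LinearMap.comp_apply, ← toLpLin_mul_same, hN, toEuclideanLin_eigenvectorBasis,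
    inner_smul_right, hA.eigenvectorBasis.inner_eq_ite]
  split_ifs with h <;> simp [h]

lemma norm_sq_toEuclideanLin_eigenvectorBasis [DecidableEq m] {N : Matrix m n ℝ}
    (hN : Nᴴ * N = A) (k : n) :
    ‖toEuclideanLin N (hA.eigenvectorBasis k)‖ ^ 2 = hA.eigenvalues k := by
  rw [← real_inner_self_eq_norm_sq, hA.inner_toEuclideanLin_eigenvectorBasis hN, if_pos rfl]

lemma antitone_eigenvalues_comp_equivOfCardEq :
    Antitone (hA.eigenvalues ∘ Fintype.equivOfCardEq (Fintype.card_fin _)) := fun i j hij => by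
  simpa [eigenvalues] using hA.eigenvalues₀_antitone hij

theorem sum_norm_sq_toEuclideanLin_le [DecidableEq m] {N : Matrix n m ℝ} (hN : N * Nᴴ = A)
    (es : Fin (Fintype.card n) ≃ n) (hes : Antitone (hA.eigenvalues ∘ es)) {d : ℕ}
    (hd : d ≤ Fintype.card n) {ψ : Fin d → EuclideanSpace ℝ m} (hψ : Orthonormal ℝ ψ) :
    ∑ i, ‖toEuclideanLin N (ψ i)‖ ^ 2 ≤ ∑ i : Fin d, hA.eigenvalues (es (Fin.castLE hd i)) := by
  set μ := hA.eigenvalues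
  let u : n → EuclideanSpace ℝ m := fun k => toEuclideanLin Nᴴ (hA.eigenvectorBasis k)
  have hu : ∀ k l, ⟪u k, u l⟫ = if k = l then μ k else 0 :=
    hA.inner_toEuclideanLin_eigenvectorBasis (by rw [conjTranspose_conjTranspose, hN])
  have hnorm : ∀ k, ‖u k‖ ^ 2 = μ k :=
    hA.norm_sq_toEuclideanLin_eigenvectorBasis (by rw [conjTranspose_conjTranspose, hN])
  have hparseval : ∀ x, ‖toEuclideanLin N x‖ ^ 2 = ∑ k, ⟪u k, x⟫ ^ 2 := fun x => by
    rw [← hA.eigenvectorBasis.sum_sq_inner_right]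
    simp only [u, toEuclideanLin_conjTranspose_eq_adjoint, LinearMap.adjoint_inner_left]
  set s : n → ℝ := fun k => ∑ i, ⟪u k, ψ i⟫ ^ 2
  have hs : ∀ k, s k ≤ μ k := fun k => by
    simpa [s, real_inner_comm, hnorm] using hψ.sum_inner_products_le (u k) (s := Finset.univ)
  -- Bessel for `ψ` gives `w ≤ 1`, Bessel for the orthogonal family `u` gives `∑ w ≤ d`;
  -- where `μ k = 0` the junk value `s k / 0 = 0` is harmless, as then `s k = 0`.
  set w : n → ℝ := fun k => s k / μ k
  have hμ0 : ∀ k, 0 ≤ μ k := fun k => hnorm k ▸ sq_nonneg _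
  have hs0 : ∀ k, 0 ≤ s k := fun k => Finset.sum_nonneg fun i _ => sq_nonneg _
  have hμw : ∀ k, μ k * w k = s k := fun k => by
    rcases (hμ0 k).eq_or_lt with h | h
    · simp [w, ← h, le_antisymm (h ▸ hs k) (hs0 k)]
    · exact mul_div_cancel₀ _ h.ne'
  have hw : ∑ k, w k ≤ d := calc
    ∑ k, w k = ∑ i, ∑ k, ⟪u k, ψ i⟫ ^ 2 / ‖u k‖ ^ 2 := by
      simp only [w, s, hnorm, Finset.sum_div]; exact Finset.sum_comm
    _ ≤ ∑ i : Fin d, ‖ψ i‖ ^ 2 := Finset.sum_le_sum fun i _ =>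
      sum_inner_sq_div_norm_sq_le_of_pairwise_orthogonal
        (fun k l hkl => by simpa [hkl] using hu k l) (ψ i)
    _ = d := by simp [hψ.1]
  calc ∑ i, ‖toEuclideanLin N (ψ i)‖ ^ 2 = ∑ k, μ k * w k := by
        simp only [hparseval, hμw, s]; exact Finset.sum_comm
    _ = ∑ j, μ (es j) * w (es j) := (es.sum_comp fun k => μ k * w k).symm
    _ ≤ ∑ i : Fin d, μ (es (Fin.castLE hd i)) :=
      sum_mul_le_sum_castLE_of_antitone hd hes (fun j => hμ0 _)
        (fun j => div_nonneg (hs0 _) (hμ0 _)) (fun j => div_le_one_of_le₀ (hs _) (hμ0 _))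
        (by rwa [es.sum_comp w])

theorem sum_eigenvalues_castLE_eq {A' : Matrix m m ℝ} (hA' : A'.IsHermitian) [DecidableEq m]
    {M : Matrix m n ℝ} (hMA : Mᴴ * M = A) (hMA' : M * Mᴴ = A')
    (es : Fin (Fintype.card n) ≃ n) (hes : Antitone (hA.eigenvalues ∘ es))
    (es' : Fin (Fintype.card m) ≃ m) (hes' : Antitone (hA'.eigenvalues ∘ es')) {d : ℕ}
    (hd : d ≤ Fintype.card n) (hd' : d ≤ Fintype.card m) :
    ∑ i : Fin d, hA.eigenvalues (es (Fin.castLE hd i)) =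
      ∑ i : Fin d, hA'.eigenvalues (es' (Fin.castLE hd' i)) := by
  have hconj' : Mᴴᴴ * Mᴴ = A' := by rw [conjTranspose_conjTranspose, hMA']
  have hconj : Mᴴ * Mᴴᴴ = A := by rw [conjTranspose_conjTranspose, hMA]
  apply le_antisymm
  · simp only [← hA.norm_sq_toEuclideanLin_eigenvectorBasis hMA]
    exact hA'.sum_norm_sq_toEuclideanLin_le hMA' es' hes' hd'
      (hA.eigenvectorBasis.orthonormal.comp _ (es.injective.comp (Fin.castLE_injective hd)))
  · simp only [← hA'.norm_sq_toEuclideanLin_eigenvectorBasis hconj']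
    exact hA.sum_norm_sq_toEuclideanLin_le hconj es hes hd
      (hA'.eigenvectorBasis.orthonormal.comp _ (es'.injective.comp (Fin.castLE_injective hd')))

end Matrix.IsHermitian

noncomputable def sqrtWeighted {α : Type*} (p u : α → ℝ) : EuclideanSpace ℝ α :=
  WithLp.toLp 2 fun a => √(p a) * u a

section
variable {α : Type*} {p : α → ℝ}

lemma inner_sqrtWeighted [Fintype α] (hp : ∀ a, 0 ≤ p a) (u v : α → ℝ) :
    ⟪sqrtWeighted p u, sqrtWeighted p v⟫ = ∑ a, p a * (u a * v a) := by
  simp only [sqrtWeighted, PiLp.inner_apply, RCLike.inner_apply, conj_trivial]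
  refine Finset.sum_congr rfl fun a _ => ?_
  linear_combination (u a * v a) * Real.mul_self_sqrt (hp a)

lemma norm_sq_sqrtWeighted [Fintype α] (hp : ∀ a, 0 ≤ p a) (u : α → ℝ) :
    ‖sqrtWeighted p u‖ ^ 2 = ∑ a, p a * (u a * u a) := by
  rw [← real_inner_self_eq_norm_sq, inner_sqrtWeighted hp]

lemma orthonormal_sqrtWeighted_iff [Fintype α] {ι : Type*} [DecidableEq ι]
    (hp : ∀ a, 0 ≤ p a) (f : α → ι → ℝ) :
    Orthonormal ℝ (fun i => sqrtWeighted p (f · i)) ↔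
      ∀ i j, ∑ a, p a * (f a i * f a j) = if i = j then 1 else 0 := by
  simp only [orthonormal_iff_ite, inner_sqrtWeighted hp]

lemma sqrtWeighted_div_sqrt (hp : ∀ a, 0 < p a) (x : EuclideanSpace ℝ α) :
    sqrtWeighted p (fun a => x a / √(p a)) = x := by
  ext a
  simp [sqrtWeighted, mul_div_cancel₀ _ (Real.sqrt_pos.mpr (hp a)).ne']

end

section
variable {𝒳 𝒴 : Type*} [Fintype 𝒳] [Fintype 𝒴] [DecidableEq 𝒳] {P : 𝒳 → 𝒴 → ℝ}
  {p : 𝒳 → ℝ} {q : 𝒴 → ℝ} {B : Matrix 𝒳 𝒴 ℝ}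

theorem sum_mul_sub_sq_eq (hp : ∀ x, 0 ≤ p x) (hq : ∀ y, 0 ≤ q y)
    (hpP : ∀ x, ∑ y, P x y = p x) (hqP : ∀ y, ∑ x, P x y = q y)
    (hPB : ∀ x y, P x y = √(p x) * B x y * √(q y)) (u : 𝒳 → ℝ) (v : 𝒴 → ℝ) :
    ∑ x, ∑ y, P x y * (u x - v y) ^ 2 =
      ‖sqrtWeighted p u‖ ^ 2 - ‖toEuclideanLin Bᴴ (sqrtWeighted p u)‖ ^ 2 +
        ‖toEuclideanLin Bᴴ (sqrtWeighted p u) - sqrtWeighted q v‖ ^ 2 := by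
  have hcross : ⟪toEuclideanLin Bᴴ (sqrtWeighted p u), sqrtWeighted q v⟫ =
      ∑ x, ∑ y, P x y * (u x * v y) := by
    simp only [sqrtWeighted, toLpLin_apply, PiLp.inner_apply, RCLike.inner_apply, conj_trivial,
      mulVec, dotProduct, conjTranspose_apply, star_trivial, Finset.mul_sum, hPB]
    rw [Finset.sum_comm]
    exact Finset.sum_congr rfl fun x _ => Finset.sum_congr rfl fun y _ => by ring
  have hexpand : ∀ x y, P x y * (u x - v y) ^ 2 =
      P x y * (u x * u x) - 2 * (P x y * (u x * v y)) + P x y * (v y * v y) := fun x y => by ring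
  rw [norm_sub_sq_real, hcross, norm_sq_sqrtWeighted hp, norm_sq_sqrtWeighted hq]
  simp only [← hpP, ← hqP, Finset.sum_mul]
  rw [Finset.sum_comm (f := fun y x => P x y * (v y * v y))]
  simp only [hexpand, Finset.sum_add_distrib, Finset.sum_sub_distrib, ← Finset.mul_sum]
  ring

theorem sum_mul_sum_sub_sq_eq {ι : Type*} [Fintype ι] (hp : ∀ x, 0 ≤ p x) (hq : ∀ y, 0 ≤ q y)
    (hpP : ∀ x, ∑ y, P x y = p x) (hqP : ∀ y, ∑ x, P x y = q y)
    (hPB : ∀ x y, P x y = √(p x) * B x y * √(q y)) (f : 𝒳 → ι → ℝ) (g : 𝒴 → ι → ℝ) :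
    ∑ x, ∑ y, P x y * ∑ i, (f x i - g y i) ^ 2 =
      ∑ i, (‖sqrtWeighted p (f · i)‖ ^ 2 - ‖toEuclideanLin Bᴴ (sqrtWeighted p (f · i))‖ ^ 2 +
        ‖toEuclideanLin Bᴴ (sqrtWeighted p (f · i)) - sqrtWeighted q (g · i)‖ ^ 2) := by
  simp only [← sum_mul_sub_sq_eq hp hq hpP hqP hPB, Finset.mul_sum]
  exact (Finset.sum_congr rfl fun x _ => Finset.sum_comm).trans Finset.sum_comm

theorem sub_sum_eigenvalues_le_sum_mul_sum_sub_sq [DecidableEq 𝒴] (hp : ∀ x, 0 ≤ p x)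
    (hq : ∀ y, 0 ≤ q y) (hpP : ∀ x, ∑ y, P x y = p x) (hqP : ∀ y, ∑ x, P x y = q y)
    (hPB : ∀ x y, P x y = √(p x) * B x y * √(q y)) (es : Fin (Fintype.card 𝒴) ≃ 𝒴)
    (hes : Antitone ((isHermitian_conjTranspose_mul_self B).eigenvalues ∘ es)) {d : ℕ}
    (hd : d ≤ Fintype.card 𝒴) {f : 𝒳 → Fin d → ℝ}
    (hf : ∀ i j, ∑ x, p x * (f x i * f x j) = if i = j then 1 else 0) (g : 𝒴 → Fin d → ℝ) :
    d - ∑ i : Fin d, (isHermitian_conjTranspose_mul_self B).eigenvalues (es (Fin.castLE hd i)) ≤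
      ∑ x, ∑ y, P x y * ∑ i, (f x i - g y i) ^ 2 := by
  have hf' := (orthonormal_sqrtWeighted_iff hp f).2 hf
  have hbound := (isHermitian_conjTranspose_mul_self B).sum_norm_sq_toEuclideanLin_le
    (N := Bᴴ) (by rw [conjTranspose_conjTranspose]) es hes hd hf'
  have hresidual : 0 ≤ ∑ i, ‖toEuclideanLin Bᴴ (sqrtWeighted p (f · i)) -
      sqrtWeighted q (g · i)‖ ^ 2 := Finset.sum_nonneg fun i _ => sq_nonneg _
  rw [sum_mul_sum_sub_sq_eq hp hq hpP hqP hPB, Finset.sum_add_distrib, Finset.sum_sub_distrib]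
  simp only [hf'.1, one_pow, Finset.sum_const, Finset.card_univ, Fintype.card_fin, nsmul_one]
  linarith

theorem exists_sum_mul_sum_sub_sq_eq [DecidableEq 𝒴] (hp : ∀ x, 0 < p x) (hq : ∀ y, 0 < q y)
    (hpP : ∀ x, ∑ y, P x y = p x) (hqP : ∀ y, ∑ x, P x y = q y)
    (hPB : ∀ x y, P x y = √(p x) * B x y * √(q y)) (es : Fin (Fintype.card 𝒳) ≃ 𝒳) {d : ℕ}
    (hd : d ≤ Fintype.card 𝒳) :
    ∃ (f : 𝒳 → Fin d → ℝ) (g : 𝒴 → Fin d → ℝ),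
      (∀ i j, ∑ x, p x * (f x i * f x j) = if i = j then 1 else 0) ∧
      ∑ x, ∑ y, P x y * ∑ i, (f x i - g y i) ^ 2 =
        d - ∑ i : Fin d,
          (isHermitian_mul_conjTranspose_self B).eigenvalues (es (Fin.castLE hd i)) := by
  set hA := isHermitian_mul_conjTranspose_self B
  set φ : Fin d → EuclideanSpace ℝ 𝒳 := fun i => hA.eigenvectorBasis (es (Fin.castLE hd i))
  have hφ : Orthonormal ℝ φ :=
    hA.eigenvectorBasis.orthonormal.comp _ (es.injective.comp (Fin.castLE_injective hd))
  refine ⟨fun x i => φ i x / √(p x), fun y i => toEuclideanLin Bᴴ (φ i) y / √(q y),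
    (orthonormal_sqrtWeighted_iff (fun x => (hp x).le) _).1 ?_, ?_⟩
  · simpa only [sqrtWeighted_div_sqrt hp] using hφ
  rw [sum_mul_sum_sub_sq_eq (fun x => (hp x).le) (fun y => (hq y).le) hpP hqP hPB]
  simp only [sqrtWeighted_div_sqrt hp, sqrtWeighted_div_sqrt hq, sub_self, norm_zero, hφ.1, φ,
    hA.norm_sq_toEuclideanLin_eigenvectorBasis (by rw [conjTranspose_conjTranspose])]
  simp

end

theorem min_mse_eq_d_sub_sum_sq_singular_values_general
    {𝒳 𝒴 : Type} [Fintype 𝒳] [Fintype 𝒴] [DecidableEq 𝒴]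
    (P : 𝒳 → 𝒴 → ℝ)
    (hpX : ∀ x, 0 < ∑ y, P x y)
    (hpY : ∀ y, 0 < ∑ x, P x y)
    (B : Matrix 𝒳 𝒴 ℝ)
    (hB : B = Matrix.of fun x y => P x y / Real.sqrt ((∑ y', P x y') * (∑ x', P x' y)))
    (σ : Fin (Fintype.card 𝒴) → ℝ) (hσmono : Antitone σ)
    (e : Fin (Fintype.card 𝒴) ≃ 𝒴) (hσ : ∀ i, σ i = singularValues B (e i))
    (d : ℕ) (hd : d ≤ min (Fintype.card 𝒳) (Fintype.card 𝒴)) :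
    IsLeast {t : ℝ | ∃ (f : 𝒳 → Fin d → ℝ) (g : 𝒴 → Fin d → ℝ),
        (∀ i j, ∑ x, (∑ y, P x y) * (f x i * f x j) = if i = j then 1 else 0) ∧
        t = ∑ x, ∑ y, P x y * (∑ i, (f x i - g y i) ^ 2)}
      ((d : ℝ) - ∑ i : Fin d, σ (Fin.castLE (hd.trans (min_le_right _ _)) i) ^ 2) := by
  classical
  have hPB : ∀ x y, P x y = √(∑ y, P x y) * B x y * √(∑ x, P x y) := fun x y => by
    rw [hB, of_apply, Real.sqrt_mul (hpX x).le]
    field_simp [(Real.sqrt_pos.mpr (hpX x)).ne', (Real.sqrt_pos.mpr (hpY y)).ne']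
  have hd𝒳 := hd.trans (min_le_left _ _)
  set hA := isHermitian_conjTranspose_mul_self B
  set hA' := isHermitian_mul_conjTranspose_self B
  have he : Antitone (hA.eigenvalues ∘ e) := fun i j hij => by
    simpa only [Function.comp, ← sq_singularValues, ← hσ] using
      pow_le_pow_left₀ (hσ j ▸ Real.sqrt_nonneg _) (hσmono hij) 2
  simp only [hσ, sq_singularValues]
  refine ⟨?_, ?_⟩
  · obtain ⟨f, g, hf, hfg⟩ := exists_sum_mul_sum_sub_sq_eq hpX hpY (fun _ => rfl) (fun _ => rfl)
      hPB (Fintype.equivOfCardEq (Fintype.card_fin _)) hd𝒳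
    refine ⟨f, g, hf, ?_⟩
    rw [hfg, hA.sum_eigenvalues_castLE_eq hA' rfl rfl e he _
      hA'.antitone_eigenvalues_comp_equivOfCardEq _ hd𝒳]
  · rintro _ ⟨f, g, hf, rfl⟩
    exact sub_sum_eigenvalues_le_sum_mul_sum_sub_sq (fun x => (hpX x).le) (fun y => (hpY y).le)
      (fun _ => rfl) (fun _ => rfl) hPB e he _ hf g

/-- With `B x y = P(x,y)/√(pX(x) pY(y))` and `σ` the singular values of
`B` in nonincreasing order, for any `d ≤ min(|𝒳|, |𝒴|)` the minimum of
`E[‖f(X) − g(Y)‖₂²]` over all `f : 𝒳 → ℝ^d` with `E[f(X) f(X)ᵀ] = I_d` and all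
`g : 𝒴 → ℝ^d` equals `d − Σ_{i=1}^d σᵢ²`. -/
theorem min_mse_eq_d_sub_sum_sq_singular_values
    {𝒳 𝒴 : Type} [Fintype 𝒳] [Fintype 𝒴] [DecidableEq 𝒴]
    (P : 𝒳 → 𝒴 → ℝ)
    (hP0 : ∀ x y, 0 ≤ P x y)
    (hP1 : ∑ x, ∑ y, P x y = 1)
    (hpX : ∀ x, 0 < ∑ y, P x y)
    (hpY : ∀ y, 0 < ∑ x, P x y)
    (B : Matrix 𝒳 𝒴 ℝ)
    (hB : B = Matrix.of fun x y => P x y / Real.sqrt ((∑ y', P x y') * (∑ x', P x' y)))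
    (σ : Fin (Fintype.card 𝒴) → ℝ) (hσmono : Antitone σ)
    (e : Fin (Fintype.card 𝒴) ≃ 𝒴) (hσ : ∀ i, σ i = singularValues B (e i))
    (d : ℕ) (hd : d ≤ min (Fintype.card 𝒳) (Fintype.card 𝒴)) :
    IsLeast {t : ℝ | ∃ (f : 𝒳 → Fin d → ℝ) (g : 𝒴 → Fin d → ℝ),
        (∀ i j, ∑ x, (∑ y, P x y) * (f x i * f x j) = if i = j then 1 else 0) ∧
        t = ∑ x, ∑ y, P x y * (∑ i, (f x i - g y i) ^ 2)}
      ((d : ℝ) - ∑ i : Fin d, σ (Fin.castLE (hd.trans (min_le_right _ _)) i) ^ 2) :=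
  min_mse_eq_d_sub_sum_sq_singular_values_general P hpX hpY B hB σ hσmono e hσ d hd
end

section
/- (Hermite polynomials are principal functions of the additive Gaussian noise channel) Let σ₁, σ₂ > 0, let X have the Gaussian distribution N(0, σ₁²) on ℝ, let N have the Gaussian distribution N(0, σ₂²) and be independent of X, and set Y = X + N. Let He_k denote the k-th probabilists' Hermite polynomial and let ρ = σ₁/√(σ₁² + σ₂²). Then for every k ≥ 0, the conditional expectation of He_k(X/σ₁) given Y satisfies E[He_k(X/σ₁) | Y] = ρᵏ · He_k(Y/√(σ₁² + σ₂²)) almost surely. -/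
open MeasureTheory ProbabilityTheory

/-- The law of the independent pair `(X, N)` with `X ~ N(0, σ₁²)` and `N ~ N(0, σ₂²)`:
the product of two centered Gaussian measures on `ℝ × ℝ`. -/
noncomputable def gaussPair (σ₁ σ₂ : ℝ) : Measure (ℝ × ℝ) :=
  (gaussianReal 0 ⟨σ₁ ^ 2, sq_nonneg σ₁⟩).prod (gaussianReal 0 ⟨σ₂ ^ 2, sq_nonneg σ₂⟩)

/-!
Write `τ = √(σ₁² + σ₂²)` and `Y = X + N`. The residual `W = X/σ₁ - ρ Y/τ` of the linear
regression of `X/σ₁` on `Y/τ` is uncorrelated with `Y`, and `(W, Y)` is a Gaussian pair, so `W` is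
independent of `Y` with law `N(0, 1 - ρ²)`. Conditioning on `Y` therefore amounts to freezing `Y`
and integrating over `W`, which reduces the theorem to Mehler's identity
`E[He_k(ρ z + W)] = ρᵏ He_k(z)`. The latter follows by induction from the three-term recurrence
`He_{k+2} = X He_{k+1} - (k+1) He_k` and Stein's lemma `E[(x - m) q(x)] = v E[q'(x)]` for
`x ~ N(m, v)`.
-/

open Polynomial
open scoped NNReal

lemma derivative_hermite_succ (n : ℕ) :
    derivative (hermite (n + 1)) = ((n : ℤ[X]) + 1) * hermite n := by
  induction n with
  | zero => simp
  | succ n ih =>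
    rw [hermite_succ (n + 1), derivative_sub, derivative_mul, derivative_X, one_mul, ih,
      derivative_mul, hermite_succ n]
    simp only [derivative_add, derivative_natCast, derivative_one, add_zero, zero_mul, zero_add,
      Nat.cast_add, Nat.cast_one]
    ring

lemma hermite_succ_succ (n : ℕ) :
    hermite (n + 2) = X * hermite (n + 1) - ((n : ℤ[X]) + 1) * hermite n := by
  rw [hermite_succ (n + 1), derivative_hermite_succ]

lemma integrable_eval_gaussianReal (m : ℝ) (v : ℝ≥0) (q : ℝ[X]) :
    Integrable (fun x ↦ q.eval x) (gaussianReal m v) := by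
  induction q using Polynomial.induction_on' with
  | add p q hp hq => simp only [eval_add]; exact hp.add hq
  | monomial n a =>
    simpa using (integrable_pow_of_mem_interior_integrableExpSet (X := id) (by simp) n).const_mul a

lemma MeasureTheory.Integrable.mul_gaussianPDFReal {m : ℝ} {v : ℝ≥0} (hv : v ≠ 0) {f : ℝ → ℝ}
    (hf : Integrable f (gaussianReal m v)) :
    Integrable (fun x ↦ f x * gaussianPDFReal m v x) := by
  rw [gaussianReal_of_var_ne_zero _ hv, gaussianPDF_def,
    integrable_withDensity_iff_integrable_smul' (by fun_prop) (by simp)] at hf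
  refine hf.congr (ae_of_all _ fun x ↦ ?_)
  simp [ENNReal.toReal_ofReal (gaussianPDFReal_nonneg _ _ _), mul_comm]

lemma hasDerivAt_gaussianPDFReal (m : ℝ) (v : ℝ≥0) (x : ℝ) :
    HasDerivAt (gaussianPDFReal m v) (-((x - m) / v) * gaussianPDFReal m v x) x := by
  have h : HasDerivAt (fun y ↦ -(y - m) ^ 2 / (2 * v)) (-((x - m) / v)) x :=
    ((((hasDerivAt_id' x).sub_const m).pow 2).neg.div_const (2 * (v : ℝ))).congr_deriv (by ring)
  rw [gaussianPDFReal_def]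
  exact (h.exp.const_mul _).congr_deriv (by ring)

lemma integral_sub_mul_eval_gaussianReal (m : ℝ) (v : ℝ≥0) (q : ℝ[X]) :
    ∫ x, (x - m) * q.eval x ∂gaussianReal m v
      = v * ∫ x, q.derivative.eval x ∂gaussianReal m v := by
  rcases eq_or_ne v 0 with rfl | hv
  · simp
  have hI (p : ℝ[X]) : Integrable (fun x ↦ p.eval x * gaussianPDFReal m v x) :=
    (integrable_eval_gaussianReal m v p).mul_gaussianPDFReal hv
  have ibp := integral_mul_deriv_eq_deriv_mul_of_integrable (fun x _ ↦ q.hasDerivAt x)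
    (fun x _ ↦ hasDerivAt_gaussianPDFReal m v x)
    ((hI (-C (v : ℝ)⁻¹ * (X - C m) * q)).congr (ae_of_all _ fun x ↦ by
      simp only [Pi.mul_apply, eval_mul, eval_neg, eval_C, eval_sub, eval_X]
      ring))
    (hI q.derivative) (hI q)
  simp only [integral_gaussianReal_eq_integral_smul hv, smul_eq_mul]
  calc ∫ x, gaussianPDFReal m v x * ((x - m) * q.eval x)
      = -v * ∫ x, q.eval x * (-((x - m) / v) * gaussianPDFReal m v x) := by
        rw [← integral_const_mul]
        congr 1 with x
        field_simp
    _ = v * ∫ x, gaussianPDFReal m v x * q.derivative.eval x := by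
        rw [ibp]
        simp only [mul_comm (gaussianPDFReal m v _)]
        ring

lemma integral_aeval_hermite_succ_succ_gaussianReal (m : ℝ) (v : ℝ≥0) (j : ℕ) :
    ∫ x, aeval x (hermite (j + 2)) ∂gaussianReal m v
      = m * ∫ x, aeval x (hermite (j + 1)) ∂gaussianReal m v
        - (1 - v) * (j + 1) * ∫ x, aeval x (hermite j) ∂gaussianReal m v := by
  simp_rw [← eval_map_algebraMap]
  set He : ℕ → ℝ[X] := fun j ↦ (hermite j).map (algebraMap ℤ ℝ)
  have hint (p : ℝ[X]) := integrable_eval_gaussianReal m v p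
  have hstein : ∫ x, (x - m) * (He (j + 1)).eval x ∂gaussianReal m v
      = v * ((j + 1) * ∫ x, (He j).eval x ∂gaussianReal m v) := by
    rw [integral_sub_mul_eval_gaussianReal, derivative_map, derivative_hermite_succ]
    simp [integral_const_mul, He]
  have hsplit : (fun x ↦ (He (j + 2)).eval x) = fun x ↦ ((X - C m) * He (j + 1)).eval x
      + (m * (He (j + 1)).eval x - (j + 1) * (He j).eval x) := by
    ext x
    simp only [He]
    rw [hermite_succ_succ]
    simp only [Polynomial.map_sub, Polynomial.map_mul, Polynomial.map_add, Polynomial.map_X,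
      Polynomial.map_natCast, Polynomial.map_one, eval_sub, eval_mul, eval_X, eval_C, eval_add,
      eval_natCast, eval_one]
    ring
  rw [hsplit, integral_add (hint _), integral_sub ((hint _).const_mul _) ((hint _).const_mul _),
    integral_const_mul, integral_const_mul]
  · simp only [eval_mul, eval_sub, eval_X, eval_C]
    rw [hstein]
    ring
  · exact ((hint _).const_mul _).sub ((hint _).const_mul _)

theorem integral_aeval_hermite_add_gaussianReal {ρ : ℝ} (hρ : ρ ^ 2 ≤ 1) (z : ℝ) (k : ℕ) :
    ∫ w, aeval (ρ * z + w) (hermite k) ∂gaussianReal 0 (1 - ρ ^ 2).toNNReal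
      = ρ ^ k * aeval z (hermite k) := by
  rw [← integral_map (φ := (ρ * z + ·)) (f := fun x ↦ aeval x (hermite k)) (by fun_prop)
    (by fun_prop), gaussianReal_map_const_add, zero_add]
  have hv : ((1 - ρ ^ 2).toNNReal : ℝ) = 1 - ρ ^ 2 := Real.coe_toNNReal _ (by linarith)
  induction k using Nat.twoStepInduction with
  | zero => simp
  | one => simp [integral_id_gaussianReal]
  | more j ih₀ ih₁ =>
    rw [integral_aeval_hermite_succ_succ_gaussianReal, ih₀, ih₁, hv, hermite_succ_succ]
    simp only [map_sub, map_mul, map_add, aeval_X, map_natCast, map_one]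
    ring

lemma covariance_linear_prod {μ ν : Measure ℝ} [IsProbabilityMeasure μ] [IsProbabilityMeasure ν]
    (hμ : MemLp id 2 μ) (hν : MemLp id 2 ν) (a b c d : ℝ) :
    cov[fun p : ℝ × ℝ ↦ a * p.1 + b * p.2, fun p ↦ c * p.1 + d * p.2; μ.prod ν]
      = a * c * Var[id; μ] + b * d * Var[id; ν] := by
  have h₁ : MemLp (fun p : ℝ × ℝ ↦ p.1) 2 (μ.prod ν) := hμ.comp_fst ν
  have h₂ : MemLp (fun p : ℝ × ℝ ↦ p.2) 2 (μ.prod ν) := hν.comp_snd μ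
  have h₁₁ : cov[fun p : ℝ × ℝ ↦ p.1, fun p ↦ p.1; μ.prod ν] = Var[id; μ] := by
    rw [covariance_self h₁.aemeasurable]
    exact (measurePreserving_fst (μ := μ) (ν := ν)).variance_fun_comp (f := id) hμ.aemeasurable
  have h₂₂ : cov[fun p : ℝ × ℝ ↦ p.2, fun p ↦ p.2; μ.prod ν] = Var[id; ν] := by
    rw [covariance_self h₂.aemeasurable]
    exact (measurePreserving_snd (μ := μ) (ν := ν)).variance_fun_comp (f := id) hν.aemeasurable
  have h₁₂ : cov[fun p : ℝ × ℝ ↦ p.1, fun p ↦ p.2; μ.prod ν] = 0 :=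
    covariance_fst_snd_prod hμ hν
  have h₂₁ : cov[fun p : ℝ × ℝ ↦ p.2, fun p ↦ p.1; μ.prod ν] = 0 := by
    rw [covariance_comm, h₁₂]
  change cov[(fun p : ℝ × ℝ ↦ a * p.1) + fun p ↦ b * p.2,
    (fun p : ℝ × ℝ ↦ c * p.1) + fun p ↦ d * p.2; μ.prod ν] = _
  rw [covariance_add_left (h₁.const_mul a) (h₂.const_mul b)
      ((h₁.const_mul c).add (h₂.const_mul d)),
    covariance_add_right (h₁.const_mul a) (h₁.const_mul c) (h₂.const_mul d),
    covariance_add_right (h₂.const_mul b) (h₁.const_mul c) (h₂.const_mul d)]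
  simp only [covariance_const_mul_left, covariance_const_mul_right, h₁₁, h₂₂, h₁₂, h₂₁]
  ring

lemma hasGaussianLaw_linear_pair (μ : Measure (ℝ × ℝ)) [IsGaussian μ] (a b c d : ℝ) :
    HasGaussianLaw (fun p : ℝ × ℝ ↦ (a * p.1 + b * p.2, c * p.1 + d * p.2)) μ := by
  let L : ℝ × ℝ →L[ℝ] ℝ × ℝ :=
    (a • ContinuousLinearMap.fst ℝ ℝ ℝ + b • ContinuousLinearMap.snd ℝ ℝ ℝ).prod
      (c • ContinuousLinearMap.fst ℝ ℝ ℝ + d • ContinuousLinearMap.snd ℝ ℝ ℝ)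
  exact (IsGaussian.hasGaussianLaw_id (μ := μ)).map_fun L

lemma indepFun_linear_gaussianReal_prod {m₁ m₂ : ℝ} {v₁ v₂ : ℝ≥0} {a b c d : ℝ}
    (h : a * c * v₁ + b * d * v₂ = 0) :
    IndepFun (fun p : ℝ × ℝ ↦ a * p.1 + b * p.2) (fun p ↦ c * p.1 + d * p.2)
      ((gaussianReal m₁ v₁).prod (gaussianReal m₂ v₂)) := by
  refine (hasGaussianLaw_linear_pair _ a b c d).indepFun_of_covariance_eq_zero ?_
  rw [covariance_linear_prod (memLp_id_gaussianReal 2) (memLp_id_gaussianReal 2),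
    variance_id_gaussianReal, variance_id_gaussianReal, h]

lemma map_linear_gaussianReal_prod (m₁ m₂ : ℝ) (v₁ v₂ : ℝ≥0) (a b : ℝ) :
    ((gaussianReal m₁ v₁).prod (gaussianReal m₂ v₂)).map (fun p ↦ a * p.1 + b * p.2)
      = gaussianReal (a * m₁ + b * m₂) (a ^ 2 * v₁ + b ^ 2 * v₂).toNNReal := by
  have hX := (hasGaussianLaw_linear_pair ((gaussianReal m₁ v₁).prod (gaussianReal m₂ v₂))
    a b a b).fst
  rw [hX.map_eq_gaussianReal, ← covariance_self hX.aemeasurable,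
    covariance_linear_prod (memLp_id_gaussianReal 2) (memLp_id_gaussianReal 2),
    variance_id_gaussianReal, variance_id_gaussianReal,
    integral_add ((IsGaussian.integrable_fun_id.comp_fst _).const_mul a)
      ((IsGaussian.integrable_fun_id.comp_snd _).const_mul b),
    integral_const_mul, integral_const_mul, integral_fun_fst (fun x ↦ x),
    integral_fun_snd (fun x ↦ x)]
  simp [integral_id_gaussianReal, sq]

theorem condExp_prodMk_ae_eq_integral_of_indepFun {Ω β γ F : Type*} {mΩ : MeasurableSpace Ω}
    {mβ : MeasurableSpace β} [MeasurableSpace γ] [StandardBorelSpace γ] [Nonempty γ]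
    [NormedAddCommGroup F] [NormedSpace ℝ F] [CompleteSpace F]
    {μ : Measure Ω} [IsFiniteMeasure μ] {Y : Ω → β} {U : Ω → γ}
    (hY : Measurable Y) (hU : Measurable U) (hYU : IndepFun Y U μ)
    {f : β × γ → F} (hf : StronglyMeasurable f) (hint : Integrable (fun ω ↦ f (Y ω, U ω)) μ) :
    μ[fun ω ↦ f (Y ω, U ω) | mβ.comap Y] =ᵐ[μ] fun ω ↦ ∫ u, f (Y ω, u) ∂(μ.map U) := by
  have hlaw : condDistrib U Y μ =ᵐ[μ.map Y] Kernel.const β (μ.map U) := by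
    refine condDistrib_ae_eq_of_measure_eq_compProd Y hU.aemeasurable ?_
    rw [Measure.compProd_const, ← indepFun_iff_map_prod_eq_prod_map_map hY.aemeasurable
      hU.aemeasurable]
    exact hYU
  filter_upwards [condExp_prod_ae_eq_integral_condDistrib hY hU.aemeasurable hf hint,
    ae_of_ae_map hY.aemeasurable hlaw] with ω hω hκ
  rw [hω, hκ, Kernel.const_apply]

lemma gaussPair_eq_prod (σ₁ σ₂ : ℝ) : gaussPair σ₁ σ₂
    = (gaussianReal 0 (σ₁ ^ 2).toNNReal).prod (gaussianReal 0 (σ₂ ^ 2).toNNReal) := by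
  rw [gaussPair, Real.toNNReal_of_nonneg (sq_nonneg σ₁), Real.toNNReal_of_nonneg (sq_nonneg σ₂)]
  rfl

instance (σ₁ σ₂ : ℝ) : IsGaussian (gaussPair σ₁ σ₂) := by
  rw [gaussPair_eq_prod]
  infer_instance

lemma residual_eq_linear {σ₁ τ : ℝ} (h₁ : σ₁ ≠ 0) (hτ₀ : τ ≠ 0) :
    (fun p : ℝ × ℝ ↦ p.1 / σ₁ - σ₁ / τ * ((p.1 + p.2) / τ))
      = fun p ↦ (1 / σ₁ - σ₁ / τ ^ 2) * p.1 + -(σ₁ / τ ^ 2) * p.2 := by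
  funext p
  field_simp
  ring

lemma indepFun_add_residual_gaussPair {σ₁ σ₂ τ : ℝ} (h₁ : σ₁ ≠ 0)
    (hτ : τ ^ 2 = σ₁ ^ 2 + σ₂ ^ 2) :
    IndepFun (fun p : ℝ × ℝ ↦ p.1 + p.2) (fun p ↦ p.1 / σ₁ - σ₁ / τ * ((p.1 + p.2) / τ))
      (gaussPair σ₁ σ₂) := by
  have hτ₀ : τ ≠ 0 := by
    rintro rfl
    nlinarith [sq_pos_of_ne_zero h₁, sq_nonneg σ₂]
  have h := indepFun_linear_gaussianReal_prod (m₁ := 0) (m₂ := 0) (v₁ := (σ₁ ^ 2).toNNReal)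
    (v₂ := (σ₂ ^ 2).toNNReal) (a := 1) (b := 1) (c := 1 / σ₁ - σ₁ / τ ^ 2) (d := -(σ₁ / τ ^ 2))
    (by
      rw [Real.coe_toNNReal _ (sq_nonneg _), Real.coe_toNNReal _ (sq_nonneg _)]
      field_simp
      linear_combination σ₁ * hτ)
  simp only [one_mul] at h
  rwa [gaussPair_eq_prod, residual_eq_linear h₁ hτ₀]

lemma map_residual_gaussPair {σ₁ σ₂ τ : ℝ} (h₁ : σ₁ ≠ 0) (hτ : τ ^ 2 = σ₁ ^ 2 + σ₂ ^ 2) :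
    (gaussPair σ₁ σ₂).map (fun p ↦ p.1 / σ₁ - σ₁ / τ * ((p.1 + p.2) / τ))
      = gaussianReal 0 (1 - (σ₁ / τ) ^ 2).toNNReal := by
  have hτ₀ : τ ≠ 0 := by
    rintro rfl
    nlinarith [sq_pos_of_ne_zero h₁, sq_nonneg σ₂]
  rw [gaussPair_eq_prod, residual_eq_linear h₁ hτ₀, map_linear_gaussianReal_prod,
    Real.coe_toNNReal _ (sq_nonneg _), Real.coe_toNNReal _ (sq_nonneg _)]
  congr 2
  · ring
  · field_simp
    linear_combination (-σ₁ ^ 2) * hτ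

theorem hermite_principal_functions_general (σ₁ σ₂ : ℝ) (h1 : 0 < σ₁) (k : ℕ) :
    (gaussPair σ₁ σ₂)[(fun p : ℝ × ℝ => Polynomial.aeval (p.1 / σ₁) (Polynomial.hermite k))
        | MeasurableSpace.comap (fun p : ℝ × ℝ => p.1 + p.2) inferInstance]
      =ᵐ[gaussPair σ₁ σ₂]
      (fun p : ℝ × ℝ => (σ₁ / Real.sqrt (σ₁ ^ 2 + σ₂ ^ 2)) ^ k *
        Polynomial.aeval ((p.1 + p.2) / Real.sqrt (σ₁ ^ 2 + σ₂ ^ 2)) (Polynomial.hermite k)) := by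
  set τ := Real.sqrt (σ₁ ^ 2 + σ₂ ^ 2)
  have hτ : τ ^ 2 = σ₁ ^ 2 + σ₂ ^ 2 := Real.sq_sqrt (by positivity)
  have hρ : (σ₁ / τ) ^ 2 ≤ 1 := by
    rw [div_pow, hτ]
    exact div_le_one_of_le₀ (by nlinarith) (by positivity)
  set W := fun p : ℝ × ℝ ↦ p.1 / σ₁ - σ₁ / τ * ((p.1 + p.2) / τ)
  have hsplit : (fun p : ℝ × ℝ ↦ aeval (p.1 / σ₁) (hermite k))
      = fun p ↦ aeval (σ₁ / τ * ((p.1 + p.2) / τ) + W p) (hermite k) := by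
    simp [W]
  have hint : Integrable (fun p : ℝ × ℝ ↦ aeval (p.1 / σ₁) (hermite k)) (gaussPair σ₁ σ₂) := by
    have h := integrable_eval_gaussianReal 0 (σ₁ ^ 2).toNNReal
      (((hermite k).map (algebraMap ℤ ℝ)).comp (X * C σ₁⁻¹))
    simp only [eval_comp, eval_mul, eval_X, eval_C, eval_map_algebraMap, ← div_eq_mul_inv] at h
    rw [gaussPair_eq_prod]
    exact h.comp_fst _
  rw [hsplit] at hint ⊢
  refine (condExp_prodMk_ae_eq_integral_of_indepFun
    (f := fun q : ℝ × ℝ ↦ aeval (σ₁ / τ * (q.1 / τ) + q.2) (hermite k)) (by fun_prop) (by fun_prop)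
    (indepFun_add_residual_gaussPair h1.ne' hτ) (Continuous.stronglyMeasurable (by fun_prop))
    hint).trans (ae_of_all _ fun p ↦ ?_)
  rw [map_residual_gaussPair h1.ne' hτ]
  exact integral_aeval_hermite_add_gaussianReal hρ ((p.1 + p.2) / τ) k

/-- **Hermite polynomials are principal functions of the additive Gaussian noise channel.**
For `X ~ N(0, σ₁²)`, `N ~ N(0, σ₂²)` independent, `Y = X + N`, and `He_k` the k-th
probabilists' Hermite polynomial, with `ρ = σ₁ / √(σ₁² + σ₂²)`:
`E[He_k(X/σ₁) | Y] = ρᵏ · He_k(Y/√(σ₁² + σ₂²))` almost surely, where the conditional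
expectation is taken with respect to the σ-algebra generated by `Y = X + N` on the
product space. -/
theorem hermite_principal_functions (σ₁ σ₂ : ℝ) (h1 : 0 < σ₁) (h2 : 0 < σ₂) (k : ℕ) :
    (gaussPair σ₁ σ₂)[(fun p : ℝ × ℝ => Polynomial.aeval (p.1 / σ₁) (Polynomial.hermite k))
        | MeasurableSpace.comap (fun p : ℝ × ℝ => p.1 + p.2) inferInstance]
      =ᵐ[gaussPair σ₁ σ₂]
      (fun p : ℝ × ℝ => (σ₁ / Real.sqrt (σ₁ ^ 2 + σ₂ ^ 2)) ^ k *
        Polynomial.aeval ((p.1 + p.2) / Real.sqrt (σ₁ ^ 2 + σ₂ ^ 2)) (Polynomial.hermite k)) :=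
  hermite_principal_functions_general σ₁ σ₂ h1 k
end
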